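/- arXiv:math/0606355 — 5 statements merged into one kernel-verified Lean document; each statement's English description precedes it below -/
import Mathlib

section
/- With λ = (λ_0, λ_1, ..., λ_d) ∈ ℤ^{d+1}, λ_1 ≥ ... ≥ λ_d, and w_i ∗ λ as above, if no w_i ∗ λ is dominant then there exists a unique index 0 ≤ i_0 ≤ d−1 with w_{i_0} ∗ λ = w_{i_0+1} ∗ λ. -/
/-!
STATEMENT 2: with the dot action of w_i = s_i ⋯ s_1 on weights λ = (λ_0,…,λ_d)
with λ_1 ≥ … ≥ λ_d, if no w_i ∗ λ (0 ≤ i ≤ d) is dominant, then there is a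
unique index 0 ≤ i₀ ≤ d−1 with w_{i₀} ∗ λ = w_{i₀+1} ∗ λ.
-/

/-- ρ = (0, -1, -2, …, -d). -/
def rhoWt (d : ℕ) : Fin (d + 1) → ℤ := fun j => -(j : ℤ)

/-- The simple reflection `s_i` (transposition of coordinates `i-1` and `i`). -/
def sRefl (d i : ℕ) : Equiv.Perm (Fin (d + 1)) :=
  Equiv.swap (Fin.ofNat (d + 1) (i - 1 : ℕ)) (Fin.ofNat (d + 1) (i : ℕ))

/-- `w_i = s_i · s_{i-1} ⋯ s_1` (and `w_0 = 1`). -/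
def wElt (d : ℕ) : ℕ → Equiv.Perm (Fin (d + 1))
  | 0 => 1
  | (i + 1) => sRefl d (i + 1) * wElt d i

/-- The dot action `w ∗ χ = w(χ + ρ) − ρ`. -/
def dotAct (d : ℕ) (w : Equiv.Perm (Fin (d + 1))) (χ : Fin (d + 1) → ℤ) :
    Fin (d + 1) → ℤ :=
  fun j => χ (w⁻¹ j) + rhoWt d (w⁻¹ j) - rhoWt d j

/-- A tuple is dominant if it is weakly decreasing. -/
def IsDominant (d : ℕ) (v : Fin (d + 1) → ℤ) : Prop :=
  ∀ a b : Fin (d + 1), a ≤ b → v b ≤ v a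

open Fin.NatCast

def wInvFun (d i : ℕ) (j : Fin (d + 1)) : Fin (d + 1) :=
  if (j : ℕ) < i then (((j : ℕ) + 1 : ℕ) : Fin (d + 1))
  else if (j : ℕ) = i then 0 else j

lemma winv_apply (d : ℕ) : ∀ i, i ≤ d → ∀ j : Fin (d + 1),
    (wElt d i)⁻¹ j = wInvFun d i j := by
  intro i
  induction i with
  | zero =>
    intro _ j
    rw [show wElt d 0 = 1 from rfl, inv_one, Equiv.Perm.one_apply]
    unfold wInvFun
    split_ifs with h1 h2
    · omega
    · exact Fin.ext (by simp [h2])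
    · rfl
  | succ i ih =>
    intro hi j
    have hi' : i ≤ d := by omega
    have hvi : (((i : ℕ)) : Fin (d + 1)).val = i := Fin.val_cast_of_lt (by omega)
    have hvi1 : (((i + 1 : ℕ)) : Fin (d + 1)).val = i + 1 := Fin.val_cast_of_lt (by omega)
    rw [show wElt d (i + 1) = sRefl d (i + 1) * wElt d i from rfl, mul_inv_rev,
      Equiv.Perm.mul_apply]
    have hsw : (sRefl d (i + 1))⁻¹ j
        = Equiv.swap ((i : ℕ) : Fin (d + 1)) (((i + 1 : ℕ)) : Fin (d + 1)) j := by
      simp [sRefl]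
    rw [hsw]
    rcases eq_or_ne (j : ℕ) i with hj | hj
    · have hj' : j = ((i : ℕ) : Fin (d + 1)) := Fin.ext (by rw [hvi, hj])
      rw [hj', Equiv.swap_apply_left, ih hi']
      simp only [wInvFun, hvi, hvi1]
      split_ifs <;> first | rfl | omega | exact Fin.ext (by simp only [hvi, hvi1])
    · rcases eq_or_ne (j : ℕ) (i + 1) with hj2 | hj2
      · have hj' : j = ((i + 1 : ℕ) : Fin (d + 1)) := Fin.ext (by rw [hvi1, hj2])
        rw [hj', Equiv.swap_apply_right, ih hi']
        simp only [wInvFun, hvi, hvi1]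
        split_ifs <;> first | rfl | omega | exact Fin.ext (by simp only [hvi, hvi1])
      · have hne1 : j ≠ ((i : ℕ) : Fin (d + 1)) := fun h => hj (by rw [h, hvi])
        have hne2 : j ≠ ((i + 1 : ℕ) : Fin (d + 1)) := fun h => hj2 (by rw [h, hvi1])
        rw [Equiv.swap_apply_of_ne_of_ne hne1 hne2, ih hi']
        simp only [wInvFun, hvi, hvi1]
        split_ifs <;> first | rfl | omega | exact Fin.ext (by simp only [hvi, hvi1])

lemma dotAct_lt (d i : ℕ) (hi : i ≤ d) (lam : Fin (d + 1) → ℤ) (j : Fin (d + 1))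
    (hj : (j : ℕ) < i) :
    dotAct d (wElt d i) lam j = lam ((((j : ℕ) + 1 : ℕ)) : Fin (d + 1)) - 1 := by
  have hv : (((((j : ℕ) + 1 : ℕ)) : Fin (d + 1)) : ℕ) = (j : ℕ) + 1 :=
    Fin.val_cast_of_lt (by omega)
  unfold dotAct rhoWt
  rw [winv_apply d i hi j]
  unfold wInvFun
  rw [if_pos hj, hv]
  push_cast
  ring

lemma dotAct_eq (d i : ℕ) (hi : i ≤ d) (lam : Fin (d + 1) → ℤ) (j : Fin (d + 1))
    (hj : (j : ℕ) = i) :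
    dotAct d (wElt d i) lam j = lam 0 + (i : ℤ) := by
  unfold dotAct rhoWt
  rw [winv_apply d i hi j]
  unfold wInvFun
  rw [if_neg (by omega), if_pos hj]
  simp [hj]

lemma dotAct_gt (d i : ℕ) (hi : i ≤ d) (lam : Fin (d + 1) → ℤ) (j : Fin (d + 1))
    (hj : i < (j : ℕ)) :
    dotAct d (wElt d i) lam j = lam j := by
  unfold dotAct rhoWt
  rw [winv_apply d i hi j]
  unfold wInvFun
  rw [if_neg (by omega), if_neg (by omega)]
  ring

lemma eq_iff (d : ℕ) (lam : Fin (d + 1) → ℤ) (i : ℕ) (hi : i + 1 ≤ d) :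
    dotAct d (wElt d i) lam = dotAct d (wElt d (i + 1)) lam ↔
      lam (((i + 1 : ℕ)) : Fin (d + 1)) = lam 0 + (i : ℤ) + 1 := by
  have hji : ((⟨i, by omega⟩ : Fin (d + 1)) : ℕ) = i := rfl
  constructor
  · intro h
    have h0 := congrFun h (⟨i, by omega⟩ : Fin (d + 1))
    rw [dotAct_eq d i (by omega) lam _ rfl,
      dotAct_lt d (i + 1) (by omega) lam _ (by omega)] at h0
    rw [hji] at h0
    linarith
  · intro h
    funext j
    rcases lt_trichotomy (j : ℕ) i with hj | hj | hj
    · rw [dotAct_lt d i (by omega) lam j hj, dotAct_lt d (i + 1) (by omega) lam j (by omega)]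
    · rw [dotAct_eq d i (by omega) lam j hj, dotAct_lt d (i + 1) (by omega) lam j (by omega),
        hj, h]
      ring
    · rcases eq_or_ne (j : ℕ) (i + 1) with hj2 | hj2
      · have hj' : j = ((i + 1 : ℕ) : Fin (d + 1)) :=
          Fin.ext (by rw [Fin.val_cast_of_lt (by omega : i + 1 < d + 1), hj2])
        rw [dotAct_gt d i (by omega) lam j hj, dotAct_eq d (i + 1) (by omega) lam j hj2,
          hj', h]
        push_cast
        ring
      · rw [dotAct_gt d i (by omega) lam j hj, dotAct_gt d (i + 1) (by omega) lam j (by omega)]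

lemma dominant_of_adj (d : ℕ) (v : Fin (d + 1) → ℤ)
    (hadj : ∀ k, (hk : k < d) → v ⟨k + 1, by omega⟩ ≤ v ⟨k, by omega⟩) :
    IsDominant d v := by
  have key : ∀ n, ∀ a b : Fin (d + 1), (b : ℕ) = (a : ℕ) + n → v b ≤ v a := by
    intro n
    induction n with
    | zero =>
      intro a b h
      have : a = b := Fin.ext (by omega)
      rw [this]
    | succ n ih =>
      intro a b h
      have hd : (a : ℕ) + n < d := by have := b.isLt; omega
      have h1 : v b ≤ v ⟨(a : ℕ) + n, by omega⟩ := by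
        have hb : b = ⟨(a : ℕ) + n + 1, by omega⟩ := Fin.ext (by simp only [Fin.val_mk]; omega)
        have h2 := hadj ((a : ℕ) + n) hd
        rw [← hb] at h2
        exact h2
      exact le_trans h1 (ih a ⟨(a : ℕ) + n, by omega⟩ rfl)
  intro a b hab
  exact key ((b : ℕ) - (a : ℕ)) a b (by have := Fin.le_def.mp hab; omega)

lemma dom_of (d : ℕ) (lam : Fin (d + 1) → ℤ)
    (hdec : ∀ a b : Fin (d + 1), 1 ≤ (a : ℕ) → a ≤ b → lam b ≤ lam a)
    (i : ℕ) (hi : i ≤ d)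
    (h1 : 0 < i → lam 0 + (i : ℤ) ≤ lam ((i : ℕ) : Fin (d + 1)) - 1)
    (h2 : i < d → lam (((i + 1 : ℕ)) : Fin (d + 1)) ≤ lam 0 + (i : ℤ)) :
    IsDominant d (dotAct d (wElt d i) lam) := by
  apply dominant_of_adj
  intro k hk
  rcases lt_trichotomy (k + 1) i with hc | hc | hc
  · rw [dotAct_lt d i hi lam ⟨k + 1, by omega⟩ (by simp only [Fin.val_mk]; omega),
        dotAct_lt d i hi lam ⟨k, by omega⟩ (by simp only [Fin.val_mk]; omega)]
    simp only [Fin.val_mk]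
    have hd' : lam (((k + 1 + 1 : ℕ)) : Fin (d + 1)) ≤ lam (((k + 1 : ℕ)) : Fin (d + 1)) := by
      apply hdec
      · rw [Fin.val_cast_of_lt (by omega)]; omega
      · rw [Fin.le_def, Fin.val_cast_of_lt (by omega), Fin.val_cast_of_lt (by omega)]
        omega
    linarith
  · rw [dotAct_eq d i hi lam ⟨k + 1, by omega⟩ (by simp only [Fin.val_mk]; omega),
        dotAct_lt d i hi lam ⟨k, by omega⟩ (by simp only [Fin.val_mk]; omega)]
    simp only [Fin.val_mk]
    have h1' := h1 (by omega)
    rw [show (((k : ℕ) + 1 : ℕ) : Fin (d + 1)) = ((i : ℕ) : Fin (d + 1)) by rw [hc]]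
    linarith
  · rcases eq_or_ne k i with hc2 | hc2
    · rw [dotAct_gt d i hi lam ⟨k + 1, by omega⟩ (by simp only [Fin.val_mk]; omega),
          dotAct_eq d i hi lam ⟨k, by omega⟩ (by simp only [Fin.val_mk]; omega)]
      have h2' := h2 (by omega)
      have hj' : (⟨k + 1, by omega⟩ : Fin (d + 1)) = (((i + 1 : ℕ)) : Fin (d + 1)) :=
        Fin.ext (by rw [Fin.val_cast_of_lt (by omega : i + 1 < d + 1)]
                    simp only [Fin.val_mk]; omega)
      rw [hj']
      linarith
    · rw [dotAct_gt d i hi lam ⟨k + 1, by omega⟩ (by simp only [Fin.val_mk]; omega),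
          dotAct_gt d i hi lam ⟨k, by omega⟩ (by simp only [Fin.val_mk]; omega)]
      apply hdec
      · simp only [Fin.val_mk]; omega
      · rw [Fin.le_def]; simp only [Fin.val_mk]; omega

theorem stmt2 (d : ℕ) (lam : Fin (d + 1) → ℤ)
    (hdec : ∀ a b : Fin (d + 1), 1 ≤ (a : ℕ) → a ≤ b → lam b ≤ lam a)
    (hnodom : ∀ i : ℕ, i ≤ d → ¬ IsDominant d (dotAct d (wElt d i) lam)) :
    ∃! i₀ : ℕ, i₀ + 1 ≤ d ∧
      dotAct d (wElt d i₀) lam = dotAct d (wElt d (i₀ + 1)) lam := by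
  classical
  have hex : ∃ i₀ : ℕ, i₀ + 1 ≤ d ∧
      dotAct d (wElt d i₀) lam = dotAct d (wElt d (i₀ + 1)) lam := by
    by_contra hcon
    push_neg at hcon
    have hne : ∀ i : ℕ, i + 1 ≤ d →
        lam (((i + 1 : ℕ)) : Fin (d + 1)) ≠ lam 0 + (i : ℤ) + 1 := by
      intro i h heq
      exact hcon i h ((eq_iff d lam i h).mpr heq)
    set P : ℕ → Prop := fun m => m = 0 ∨ lam 0 + (m : ℤ) < lam ((m : ℕ) : Fin (d + 1)) with hP
    set i₀ := Nat.findGreatest P d with hi₀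
    have hP0 : P 0 := Or.inl rfl
    have hPi : P i₀ := Nat.findGreatest_spec (Nat.zero_le d) hP0
    have hle : i₀ ≤ d := Nat.findGreatest_le d
    apply hnodom i₀ hle
    apply dom_of d lam hdec i₀ hle
    · intro hpos
      rcases hPi with h | h
      · omega
      · linarith
    · intro hlt
      have hnP : ¬ P (i₀ + 1) :=
        Nat.findGreatest_is_greatest (hi₀ ▸ Nat.lt_succ_self i₀) (by omega)
      have hcast : ((i₀ + 1 : ℕ) : ℤ) = (i₀ : ℤ) + 1 := by push_cast; ring
      have h1' : lam (((i₀ + 1 : ℕ)) : Fin (d + 1)) ≤ lam 0 + (i₀ : ℤ) + 1 := by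
        by_contra hcon2
        push_neg at hcon2
        exact hnP (Or.inr (by rw [hcast]; linarith))
      have h3 := lt_of_le_of_ne h1' (hne i₀ (by omega))
      exact Int.lt_add_one_iff.mp h3
  obtain ⟨i, hi, heq⟩ := hex
  refine ⟨i, ⟨hi, heq⟩, ?_⟩
  rintro j ⟨hj, heqj⟩
  have ei := (eq_iff d lam i hi).mp heq
  have ej := (eq_iff d lam j hj).mp heqj
  have hdecQ : ∀ p q : ℕ, p + 1 ≤ d → q + 1 ≤ d → p < q →
      lam (((q + 1 : ℕ)) : Fin (d + 1)) ≤ lam (((p + 1 : ℕ)) : Fin (d + 1)) := by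
    intro p q hp hq hpq
    apply hdec
    · rw [Fin.val_cast_of_lt (by omega)]; omega
    · rw [Fin.le_def, Fin.val_cast_of_lt (by omega), Fin.val_cast_of_lt (by omega)]; omega
  rcases lt_trichotomy j i with h | h | h
  · have hq := hdecQ j i hj hi h
    rw [ei, ej] at hq
    have h2 : (i : ℤ) ≤ (j : ℤ) := by linarith
    have h3 : i ≤ j := by exact_mod_cast h2
    omega
  · exact h
  · have hq := hdecQ i j hi hj h
    rw [ei, ej] at hq
    have h2 : (j : ℤ) ≤ (i : ℤ) := by linarith
    have h3 : j ≤ i := by exact_mod_cast h2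
    omega
end

section
/- For 0 ≤ j ≤ d−1 and a vector bundle F on projective d-space, H^i_{P^j}(P^d, F) = 0 for i < d − j, and the natural map H^i_{P^j}(P^d, F) → H^i(P^d, F) is an isomorphism for i > d − j. -/
/-!
STATEMENT 6: for `0 ≤ j ≤ d−1` and a vector bundle `F` on `P^d`,
`H^i_{P^j}(P^d, F) = 0` for `i < d − j`, and the natural map
`H^i_{P^j}(P^d, F) → H^i(P^d, F)` is an isomorphism for `i > d − j`.

Model (as licensed by the context, which computes everything by Čech
complexes):  a vector bundle `F` associated to a finitely generated graded
projective (= graded free) module is `F = ⊕_t O(a_t)`, encoded by the twists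
`a : Fin r → ℤ`.  Sections of `F` over the affine chart `D_+(X_T)`
(`T` a set of indices) are spanned by Laurent monomials with nonnegative
exponents outside `T` and total degree `a_t` in the `t`-th component.
Cohomology of `X = P^d` and of `U = P^d ∖ P^j` is computed by the alternating
Čech complexes on the covers `(D_+(X_i))_{0 ≤ i ≤ d}` and
`(D_+(X_k))_{j < k ≤ d}` respectively, and the local cohomology
`H^i_{P^j}(P^d,F)` is the `i`-th cohomology of the (shifted) cone of the
restriction map of Čech complexes, so that the long exact sequence
`⋯ → H^i_Y → H^i(X) → H^i(U) → ⋯` holds by construction.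
The two claims are stated as: vanishing of cone cohomology in degrees
`< d − j` (cocycles are coboundaries) and bijectivity of the induced map
`H^i(cone) → H^i(X)` in degrees `> d − j` (stated via cocycles and
coboundaries, avoiding quotients).
-/

open Finsupp

noncomputable section

variable (K : Type*) [Field K] (d j r : ℕ) (a : Fin r → ℤ)

/-- Laurent polynomials in `X_0, …, X_d`. -/
abbrev Laurent := (Fin (d + 1) → ℤ) →₀ K

/-- The ambient module: one Laurent-polynomial component for each of the `r`
summands `O(a_t)` of the bundle. -/
abbrev Amb := Fin r → Laurent K d

/-- Sections of `F = ⊕_t O(a_t)` over `D_+(∏_{i ∈ T} X_i)`: monomials with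
nonnegative exponents outside `T`, of total degree `a_t` in component `t`. -/
def secW (T : Finset (Fin (d + 1))) : Submodule K (Amb K d r) :=
  Submodule.span K {x | ∃ (t : Fin r) (μ : Fin (d + 1) → ℤ),
    (∀ i : Fin (d + 1), i ∉ T → 0 ≤ μ i) ∧ (∑ i, μ i) = a t ∧
    x = Pi.single t (Finsupp.single μ (1 : K))}

/-- Index of the degree-`p` term of the Čech complex of `X = P^d`:
`(p+1)`-element subsets of the full cover. -/
def IdxX (p : ℕ) := {T : Finset (Fin (d + 1)) // T.card = p + 1}

/-- Index of the degree-`(p-1)` term of the Čech complex of `U = P^d ∖ P^j`: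
`p`-element subsets of the subcover `{D_+(X_k) : j < k}` (empty for `p = 0`). -/
def IdxU (p : ℕ) :=
  {T : Finset (Fin (d + 1)) // T.card = p ∧ 0 < p ∧ ∀ i ∈ T, j < (i : ℕ)}

/-- The alternating Čech differential for the full cover. -/
def dX (p : ℕ) : (IdxX d p → Amb K d r) →ₗ[K] (IdxX d (p + 1) → Amb K d r) :=
  LinearMap.pi fun T => ∑ x ∈ T.1.attach,
    ((-1 : K) ^ (T.1.filter (fun y => y < x.1)).card) •
      LinearMap.proj
        (⟨T.1.erase x.1, by simp [Finset.card_erase_of_mem x.2, T.2]⟩ : IdxX d p)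

/-- The alternating Čech differential for the subcover. -/
def dU (p : ℕ) : (IdxU d j p → Amb K d r) →ₗ[K] (IdxU d j (p + 1) → Amb K d r) :=
  LinearMap.pi fun T => ∑ x ∈ T.1.attach,
    if hp : 0 < p then
      ((-1 : K) ^ (T.1.filter (fun y => y < x.1)).card) •
        LinearMap.proj
          (⟨T.1.erase x.1, ⟨by simp [Finset.card_erase_of_mem x.2, T.2.1], hp,
            fun i hi => T.2.2.2 i (Finset.mem_of_mem_erase hi)⟩⟩ : IdxU d j p)
    else 0

/-- Restriction from the Čech complex of `X` to that of `U`. -/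
def resXU (p : ℕ) : (IdxX d p → Amb K d r) →ₗ[K] (IdxU d j (p + 1) → Amb K d r) :=
  LinearMap.pi fun T => LinearMap.proj (⟨T.1, T.2.1⟩ : IdxX d p)

/-- The differential of the (shifted) cone of the restriction map; its `i`-th
cohomology is `H^i_{P^j}(P^d, F)`. -/
def dCone (p : ℕ) :
    (IdxX d p → Amb K d r) × (IdxU d j p → Amb K d r) →ₗ[K]
      (IdxX d (p + 1) → Amb K d r) × (IdxU d j (p + 1) → Amb K d r) :=
  LinearMap.prod ((dX K d r p).comp (LinearMap.fst K _ _))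
    (((resXU K d j r p).comp (LinearMap.fst K _ _)) -
      ((dU K d j r p).comp (LinearMap.snd K _ _)))

/-- The submodule of actual Čech cochains for `X` (sections over the opens). -/
def cochX (p : ℕ) : Submodule K (IdxX d p → Amb K d r) :=
  Submodule.pi Set.univ fun T => secW K d r a T.1

/-- Čech cochains for `U`. -/
def cochU (p : ℕ) : Submodule K (IdxU d j p → Amb K d r) :=
  Submodule.pi Set.univ fun T => secW K d r a T.1

/-- Cone cochains. -/
def cochY (p : ℕ) :
    Submodule K ((IdxX d p → Amb K d r) × (IdxU d j p → Amb K d r)) :=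
  (cochX K d r a p).prod (cochU K d j r a p)

/-- Cone cocycles: `Z^p_Y`, whose quotient by the coboundaries is
`H^p_{P^j}(P^d, F)`. -/
def cocycY (p : ℕ) :
    Submodule K ((IdxX d p → Amb K d r) × (IdxU d j p → Amb K d r)) :=
  cochY K d j r a p ⊓ LinearMap.ker (dCone K d j r p)

/-- Čech cocycles for `X`: `Z^p(X)`, whose quotient by the coboundaries is
`H^p(P^d, F)`. -/
def cocycX (p : ℕ) : Submodule K (IdxX d p → Amb K d r) :=
  cochX K d r a p ⊓ LinearMap.ker (dX K d r p)

namespace S6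
variable {d}

/-- the sign `(-1)^{#{y ∈ A : y < x}}` -/
def sg (A : Finset (Fin (d + 1))) (x : Fin (d + 1)) : K :=
  (-1) ^ (A.filter (fun y => y < x)).card


lemma sg_sq (A : Finset (Fin (d + 1))) (x : Fin (d + 1)) :
    sg K A x * sg K A x = 1 := by
  rw [sg, ← pow_add]
  exact Even.neg_one_pow ⟨_, rfl⟩

lemma sg_ne_zero (A : Finset (Fin (d + 1))) (x : Fin (d + 1)) :
    sg K A x ≠ 0 :=
  pow_ne_zero _ (neg_ne_zero.mpr one_ne_zero)

lemma sg_insert_self (A : Finset (Fin (d + 1))) (v : Fin (d + 1)) :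
    sg K (insert v A) v = sg K A v := by
  rw [sg, sg, Finset.filter_insert, if_neg (lt_irrefl v)]

lemma sg_erase_self (A : Finset (Fin (d + 1))) (v : Fin (d + 1)) :
    sg K (A.erase v) v = sg K A v := by
  rw [sg, sg, Finset.filter_erase, Finset.erase_eq_of_notMem]
  simp

lemma sg_cross (A : Finset (Fin (d + 1))) (v x : Fin (d + 1)) (hv : v ∉ A) (hx : x ∈ A) :
    sg K A x * sg K (A.erase x) v = -(sg K A v * sg K (insert v A) x) := by
  have hxv : x ≠ v := fun h => hv (h ▸ hx)
  have h1 : (A.erase x).filter (fun y => y < v) = (A.filter (fun y => y < v)).erase x :=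
    Finset.filter_erase (p := fun y => y < v) x A
  have h2 : (insert v A).filter (fun y => y < x) =
      if v < x then insert v (A.filter (fun y => y < x)) else A.filter (fun y => y < x) :=
    Finset.filter_insert _ _ _
  have hvf : v ∉ A.filter (fun y => y < x) := fun h => hv (Finset.mem_filter.mp h).1
  rcases lt_or_gt_of_ne hxv with hlt | hgt
  · -- x < v
    have hxm : x ∈ A.filter (fun y => y < v) := Finset.mem_filter.mpr ⟨hx, hlt⟩
    obtain ⟨m, hm⟩ : ∃ m, (A.filter (fun y => y < v)).card = m + 1 :=
      ⟨_, (Nat.succ_pred_eq_of_pos (Finset.card_pos.mpr ⟨x, hxm⟩)).symm⟩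
    simp only [sg, h1, h2, if_neg (asymm hlt), Finset.card_erase_of_mem hxm, hm]
    have e : m + 1 - 1 = m := by omega
    rw [e]
    ring
  · -- v < x
    have hxm : x ∉ A.filter (fun y => y < v) := fun h => asymm hgt (Finset.mem_filter.mp h).2
    simp only [sg, h1, h2, if_pos hgt, Finset.erase_eq_of_notMem hxm,
      Finset.card_insert_of_notMem hvf]
    ring


variable {K} {r}

/-- generic Čech differential on total functions -/
def DD (F : Finset (Fin (d + 1)) → Amb K d r) (A : Finset (Fin (d + 1))) : Amb K d r :=
  ∑ x ∈ A, sg K A x • F (A.erase x)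

/-- generic Čech contraction towards vertex `v` -/
def HH (v : Fin (d + 1)) (F : Finset (Fin (d + 1)) → Amb K d r) (A : Finset (Fin (d + 1))) :
    Amb K d r :=
  if v ∈ A then 0 else sg K A v • F (insert v A)

lemma core (F : Finset (Fin (d + 1)) → Amb K d r) (A : Finset (Fin (d + 1))) (v : Fin (d + 1)) :
    DD (HH v F) A + HH v (DD F) A = F A := by
  by_cases hv : v ∈ A
  · rw [HH, if_pos hv, add_zero, DD, Finset.sum_eq_single_of_mem v hv ?h]
    · rw [HH, if_neg (Finset.notMem_erase v A), Finset.insert_erase hv, smul_smul,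
        sg_erase_self, sg_sq, one_smul]
    case h =>
      intro x hx hxv
      rw [HH, if_pos (Finset.mem_erase.mpr ⟨Ne.symm hxv, hv⟩), smul_zero]
  · have e1 : DD (HH v F) A =
        ∑ x ∈ A, (sg K A x * sg K (A.erase x) v) • F (insert v (A.erase x)) :=
      Finset.sum_congr rfl fun x _ => by
        rw [HH, if_neg (fun h => hv (Finset.mem_of_mem_erase h)), smul_smul]
    have e3 : DD F (insert v A) =
        sg K A v • F A + ∑ x ∈ A, sg K (insert v A) x • F (insert v (A.erase x)) := by
      rw [DD, Finset.sum_insert hv, Finset.erase_insert hv, sg_insert_self]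
      congr 1
      refine Finset.sum_congr rfl fun x hx => ?_
      rw [Finset.erase_insert_of_ne (fun hvx => hv (by rw [hvx]; exact hx))]
    rw [e1, HH, if_neg hv, e3, smul_add, smul_smul, sg_sq, one_smul, Finset.smul_sum]
    have hS : (∑ x ∈ A, (sg K A x * sg K (A.erase x) v) • F (insert v (A.erase x))) +
        ∑ x ∈ A, sg K A v • sg K (insert v A) x • F (insert v (A.erase x)) = 0 := by
      rw [← Finset.sum_add_distrib]
      refine Finset.sum_eq_zero fun x hx => ?_
      rw [smul_smul, ← add_smul, sg_cross K A v x hv hx, neg_add_cancel, zero_smul]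
    rw [add_comm (F A), ← add_assoc, hS, zero_add]


/-- componentwise monomial filtering, as a linear map -/
def PmL (q : (Fin (d + 1) → ℤ) → Prop) [DecidablePred q] : Amb K d r →ₗ[K] Amb K d r where
  toFun m := fun t => (m t).filter q
  map_add' m m' := by funext t; exact Finsupp.filter_add
  map_smul' c m := by funext t; exact Finsupp.filter_smul

lemma mem_secW_iff {T : Finset (Fin (d + 1))} {x : Amb K d r} :
    x ∈ secW K d r a T ↔
      ∀ t : Fin r, ∀ μ ∈ (x t).support, (∀ i ∉ T, 0 ≤ μ i) ∧ (∑ i, μ i) = a t := by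
  constructor
  · intro hx
    have hle : secW K d r a T ≤ Submodule.pi Set.univ
        (fun t => Finsupp.supported K K {μ | (∀ i ∉ T, 0 ≤ μ i) ∧ (∑ i, μ i) = a t}) := by
      rw [secW, Submodule.span_le]
      rintro x ⟨t, μ, h1, h2, rfl⟩
      intro t' _
      rcases eq_or_ne t' t with rfl | hne
      · rw [Pi.single_eq_same]
        intro ν hν
        have hν' : ν = μ := Finset.mem_singleton.mp (Finsupp.support_single_subset hν)
        subst hν'
        exact ⟨h1, h2⟩
      · rw [Pi.single_eq_of_ne hne]
        intro ν hν
        simp at hν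
    intro t μ hμ
    exact (hle hx t (Set.mem_univ t)) hμ
  · intro hx
    have hxx : x = ∑ t : Fin r, Pi.single t (x t) := (Finset.univ_sum_single x).symm
    rw [hxx]
    refine Submodule.sum_mem _ fun t _ => ?_
    have h1 : x t ∈ Finsupp.supported K K {μ | (∀ i ∉ T, 0 ≤ μ i) ∧ (∑ i, μ i) = a t} :=
      fun μ hμ => hx t μ hμ
    rw [Finsupp.supported_eq_span_single] at h1
    have h2 := Submodule.mem_map_of_mem
      (f := LinearMap.single K (fun _ : Fin r => Laurent K d) t) h1
    rw [Submodule.map_span] at h2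
    refine Submodule.span_le.mpr ?_ h2
    rintro _ ⟨_, ⟨μ, hμS, rfl⟩, rfl⟩
    exact Submodule.subset_span ⟨t, μ, hμS.1, hμS.2, rfl⟩

/-- the monomial class selected for vertex `v` within pool `S`. -/
def qv (S : Finset (Fin (d + 1))) (v : Fin (d + 1)) (μ : Fin (d + 1) → ℤ) : Prop :=
  0 ≤ μ v ∧ ∀ i ∈ S, i < v → μ i < 0

instance (S : Finset (Fin (d + 1))) (v : Fin (d + 1)) : DecidablePred (qv S v) :=
  fun _ => by unfold qv; infer_instance

lemma sum_PmL (S : Finset (Fin (d + 1))) (m : Amb K d r)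
    (hm : ∀ t μ, μ ∈ (m t).support → ∃ v ∈ S, 0 ≤ μ v) :
    ∑ v ∈ S, PmL (qv S v) m = m := by
  funext t
  rw [Finset.sum_apply]
  ext μ
  rw [Finsupp.finset_sum_apply]
  by_cases h0 : m t μ = 0
  · simp [PmL, Finsupp.filter_apply, h0]
  · obtain ⟨v1, hv1S, hv1⟩ := hm t μ (Finsupp.mem_support_iff.mpr h0)
    have hne : (S.filter fun i => 0 ≤ μ i).Nonempty :=
      ⟨v1, Finset.mem_filter.mpr ⟨hv1S, hv1⟩⟩
    set v0 := (S.filter fun i => 0 ≤ μ i).min' hne with hv0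
    have hv0m := Finset.min'_mem _ hne
    have h0S : v0 ∈ S := (Finset.mem_filter.mp hv0m).1
    have h0le : (0 : ℤ) ≤ μ v0 := (Finset.mem_filter.mp hv0m).2
    rw [Finset.sum_eq_single_of_mem v0 h0S]
    · show ((m t).filter (qv S v0)) μ = m t μ
      rw [Finsupp.filter_apply, if_pos]
      refine ⟨h0le, fun i hiS hiv => ?_⟩
      by_contra hcon
      push_neg at hcon
      exact absurd (Finset.min'_le _ i (Finset.mem_filter.mpr ⟨hiS, hcon⟩))
        (not_le.mpr hiv)
    · intro v hvS hvne
      show ((m t).filter (qv S v)) μ = 0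
      rw [Finsupp.filter_apply, if_neg]
      intro hq
      have hle : v0 ≤ v := Finset.min'_le _ v (Finset.mem_filter.mpr ⟨hvS, hq.1⟩)
      rcases lt_or_eq_of_le hle with hlt | heq
      · exact absurd h0le (not_le.mpr (hq.2 v0 h0S hlt))
      · exact hvne heq.symm

lemma DD_comp_linear (φ : Amb K d r →ₗ[K] Amb K d r) (F : Finset (Fin (d + 1)) → Amb K d r)
    (A : Finset (Fin (d + 1))) :
    DD (fun B => φ (F B)) A = φ (DD F A) := by
  rw [DD, DD, map_sum]
  exact Finset.sum_congr rfl fun x _ => (map_smul φ _ _).symm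

lemma DD_finsum {ι : Type*} (S : Finset ι) (G : ι → Finset (Fin (d + 1)) → Amb K d r)
    (A : Finset (Fin (d + 1))) :
    DD (fun B => ∑ v ∈ S, G v B) A = ∑ v ∈ S, DD (G v) A := by
  rw [DD]
  simp_rw [Finset.smul_sum]
  rw [Finset.sum_comm]
  rfl

/-- the assembled contraction operator, vertex pool `S`. -/
def kone (S : Finset (Fin (d + 1))) (F : Finset (Fin (d + 1)) → Amb K d r)
    (A : Finset (Fin (d + 1))) : Amb K d r :=
  ∑ v ∈ S, HH v (fun B => PmL (qv S v) (F B)) A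

lemma DD_kone (S : Finset (Fin (d + 1))) (F : Finset (Fin (d + 1)) → Amb K d r)
    (A : Finset (Fin (d + 1)))
    (hcov : ∀ t μ, μ ∈ (F A t).support → ∃ v ∈ S, 0 ≤ μ v)
    (hcocy : ∀ v ∈ S, v ∉ A → DD F (insert v A) = 0) :
    DD (kone S F) A = F A := by
  have h1 : DD (kone S F) A = ∑ v ∈ S, DD (HH v fun B => PmL (qv S v) (F B)) A :=
    DD_finsum S _ A
  have e : ∀ v ∈ S, DD (HH v fun B => PmL (qv S v) (F B)) A = PmL (qv S v) (F A) := by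
    intro v hv
    have hc := core (fun B => PmL (qv S v) (F B)) A v
    have hz : HH v (DD fun B => PmL (qv S v) (F B)) A = 0 := by
      rw [HH]
      split_ifs with h
      · rfl
      · rw [DD_comp_linear, hcocy v hv h, map_zero, smul_zero]
    rw [hz, add_zero] at hc
    exact hc
  rw [h1, Finset.sum_congr rfl e, sum_PmL S (F A) hcov]

lemma kone_mem_secW (S : Finset (Fin (d + 1))) (F : Finset (Fin (d + 1)) → Amb K d r)
    (A : Finset (Fin (d + 1)))
    (hF : ∀ v ∈ S, v ∉ A → F (insert v A) ∈ secW K d r a (insert v A)) :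
    kone S F A ∈ secW K d r a A := by
  rw [kone]
  refine Submodule.sum_mem _ fun v hv => ?_
  rw [HH]
  split_ifs with h
  · exact Submodule.zero_mem _
  · refine Submodule.smul_mem _ _ ?_
    rw [mem_secW_iff]
    intro t μ hμ
    have hμ' : μ ∈ ((F (insert v A)) t).support ∧ qv S v μ := by
      rw [show (PmL (qv S v) (F (insert v A))) t
          = ((F (insert v A)) t).filter (qv S v) from rfl,
        Finsupp.support_filter] at hμ
      exact Finset.mem_filter.mp hμ
    obtain ⟨hs, hq⟩ := hμ'
    have h2 := (mem_secW_iff (a := a)).mp (hF v hv h) t μ hs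
    refine ⟨fun i hiA => ?_, h2.2⟩
    rcases eq_or_ne i v with rfl | hiv
    · exact hq.1
    · exact h2.1 i (fun hin => (Finset.mem_insert.mp hin).elim hiv hiA)


/-- extension of a cochain on `IdxX` to all finsets -/
def extX (p : ℕ) (ω : IdxX d p → Amb K d r) (A : Finset (Fin (d + 1))) : Amb K d r :=
  if h : A.card = p + 1 then ω ⟨A, h⟩ else 0

/-- extension of a cochain on `IdxU` to all finsets -/
def extU (p : ℕ) (ω : IdxU d j p → Amb K d r) (A : Finset (Fin (d + 1))) : Amb K d r :=
  if h : A.card = p ∧ 0 < p ∧ ∀ i ∈ A, j < (i : ℕ) then ω ⟨A, h⟩ else 0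

lemma dX_apply (p : ℕ) (ω : IdxX d p → Amb K d r) (T : IdxX d (p + 1)) :
    dX K d r p ω T = DD (extX p ω) T.1 := by
  rw [dX]
  simp only [LinearMap.pi_apply, LinearMap.sum_apply, LinearMap.smul_apply,
    LinearMap.proj_apply]
  rw [DD, ← Finset.sum_attach T.1 (fun y => sg K T.1 y • extX p ω (T.1.erase y))]
  refine Finset.sum_congr rfl fun x _ => ?_
  have hc : (T.1.erase x.1).card = p + 1 := by
    rw [Finset.card_erase_of_mem x.2, T.2]
    omega
  rw [sg, extX, dif_pos hc]
  rfl

lemma dU_apply (p : ℕ) (hp : 0 < p) (ω : IdxU d j p → Amb K d r) (T : IdxU d j (p + 1)) :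
    dU K d j r p ω T = DD (extU j p ω) T.1 := by
  rw [dU]
  simp only [LinearMap.pi_apply, LinearMap.sum_apply, dif_pos hp, LinearMap.smul_apply,
    LinearMap.proj_apply]
  rw [DD, ← Finset.sum_attach T.1 (fun y => sg K T.1 y • extU j p ω (T.1.erase y))]
  refine Finset.sum_congr rfl fun x _ => ?_
  have hc : (T.1.erase x.1).card = p ∧ 0 < p ∧ ∀ i ∈ T.1.erase x.1, j < (i : ℕ) :=
    ⟨by rw [Finset.card_erase_of_mem x.2, T.2.1]; omega, hp,
      fun i hi => T.2.2.2 i (Finset.mem_of_mem_erase hi)⟩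
  rw [sg, extU, dif_pos hc]
  rfl

lemma dU_zero_apply (ω : IdxU d j 0 → Amb K d r) : dU K d j r 0 ω = 0 := by
  funext T
  rw [dU]
  simp [LinearMap.pi_apply, LinearMap.sum_apply]

lemma resXU_apply (p : ℕ) (ω : IdxX d p → Amb K d r) (T : IdxU d j (p + 1)) :
    resXU K d j r p ω T = ω ⟨T.1, T.2.1⟩ := rfl

lemma DD_congr {F G : Finset (Fin (d + 1)) → Amb K d r} {A : Finset (Fin (d + 1))}
    (h : ∀ x ∈ A, F (A.erase x) = G (A.erase x)) : DD F A = DD G A :=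
  Finset.sum_congr rfl fun x hx => by rw [h x hx]

lemma DD_sub (F G : Finset (Fin (d + 1)) → Amb K d r) (A : Finset (Fin (d + 1))) :
    DD (fun B => F B - G B) A = DD F A - DD G A := by
  simp [DD, smul_sub, Finset.sum_sub_distrib]

/-- the vertex pool of the subcover -/
def SU : Finset (Fin (d + 1)) := Finset.univ.filter (fun i => j < (i : ℕ))

lemma mem_SU {v : Fin (d + 1)} : v ∈ SU j ↔ j < (v : ℕ) := by
  simp [SU]

lemma SU_card (hj : j < d + 1) : (SU j : Finset (Fin (d + 1))).card = d - j := by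
  have h : (SU j : Finset (Fin (d + 1))) = Finset.Ioi ⟨j, hj⟩ := by
    ext i
    simp [SU, Finset.mem_Ioi, Fin.lt_def]
  rw [h, Fin.card_Ioi]
  simp

lemma idxU_elim {p : ℕ} (hjd : j < d + 1) (hp : d - j < p) (T : IdxU d j p) : False := by
  have hsub : T.1 ⊆ SU j := fun i hi => (mem_SU j).mpr (T.2.2.2 i hi)
  have hc := Finset.card_le_card hsub
  rw [T.2.1, SU_card j hjd] at hc
  omega

lemma sg_pair_left {v w : Fin (d + 1)} (h : v < w) :
    sg K {v, w} v = 1 ∧ sg K {v, w} w = -1 := by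
  have h1 : ({v, w} : Finset (Fin (d + 1))).filter (fun y => y < v) = ∅ := by
    rw [Finset.filter_insert, if_neg (lt_irrefl v), Finset.filter_singleton,
      if_neg (asymm h)]
  have h2 : ({v, w} : Finset (Fin (d + 1))).filter (fun y => y < w) = {v} := by
    rw [Finset.filter_insert, if_pos h, Finset.filter_singleton, if_neg (lt_irrefl w)]
    simp
  constructor
  · rw [sg, h1]; simp
  · rw [sg, h2]; simp

lemma sg_pair_mul {v w : Fin (d + 1)} (hvw : v ≠ w) :
    sg K {v, w} v * sg K {v, w} w = -1 := by
  rcases hvw.lt_or_gt with h | h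
  · rw [(sg_pair_left (K := K) h).1, (sg_pair_left (K := K) h).2]; ring
  · rw [Finset.pair_comm v w, (sg_pair_left (K := K) h).1, (sg_pair_left (K := K) h).2]
    ring

lemma sg_pair_add {v w : Fin (d + 1)} (hvw : v ≠ w) :
    sg K {v, w} v + sg K {v, w} w = 0 := by
  rcases hvw.lt_or_gt with h | h
  · rw [(sg_pair_left (K := K) h).1, (sg_pair_left (K := K) h).2]; ring
  · rw [Finset.pair_comm v w, (sg_pair_left (K := K) h).1, (sg_pair_left (K := K) h).2]
    ring

lemma DD_pair (F : Finset (Fin (d + 1)) → Amb K d r) {v w : Fin (d + 1)} (hvw : v ≠ w) :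
    DD F {v, w} = sg K {v, w} v • F {w} + sg K {v, w} w • F {v} := by
  rw [DD, Finset.sum_pair hvw]
  have e1 : ({v, w} : Finset (Fin (d + 1))).erase v = {w} := by
    rw [Finset.erase_insert (by simp [hvw])]
  have e2 : ({v, w} : Finset (Fin (d + 1))).erase w = {v} := by
    rw [Finset.erase_insert_of_ne hvw, Finset.erase_singleton]
    simp
  rw [e1, e2]

lemma dCone_apply (p : ℕ) (xu : (IdxX d p → Amb K d r) × (IdxU d j p → Amb K d r)) :
    dCone K d j r p xu
      = (dX K d r p xu.1, resXU K d j r p xu.1 - dU K d j r p xu.2) := by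
  rw [dCone]
  simp only [LinearMap.prod_apply, Pi.prod, Function.prod, LinearMap.coe_comp, Function.comp_apply,
    LinearMap.fst_apply, LinearMap.sub_apply, LinearMap.snd_apply]

lemma pair_eq {zv zw : Amb K d r} {v w : Fin (d + 1)} (hvw : v ≠ w)
    (h : sg K {v, w} v • zw + sg K {v, w} w • zv = 0) : zv = zw := by
  have h2 : sg K {v, w} w • (sg K {v, w} v • zw) + sg K {v, w} w • (sg K {v, w} w • zv)
      = 0 := by
    rw [← smul_add, h, smul_zero]
  rw [smul_smul, smul_smul, sg_sq, one_smul, mul_comm, sg_pair_mul hvw] at h2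
  have h3 : -zw + zv = 0 := by rw [← neg_one_smul K zw]; exact h2
  exact (neg_add_eq_zero.mp h3).symm

end S6

open S6 in
theorem stmt6 (hj : j < d) :
    -- `H^i_{P^j}(P^d, F) = 0` for `i < d − j` :
    (0 < d - j → cocycY K d j r a 0 = ⊥) ∧
    (∀ i : ℕ, i + 1 < d - j →
      cocycY K d j r a (i + 1) ≤
        Submodule.map (dCone K d j r i) (cochY K d j r a i)) ∧
    -- `H^i_{P^j}(P^d, F) → H^i(P^d, F)` is an isomorphism for `i > d − j` :
    (∀ i : ℕ, d - j < i + 1 →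
      cocycX K d r a (i + 1) ≤
        Submodule.map (LinearMap.fst K _ _) (cocycY K d j r a (i + 1)) ⊔
          Submodule.map (dX K d r i) (cochX K d r a i)) ∧
    (∀ i : ℕ, d - j < i + 1 →
      cocycY K d j r a (i + 1) ⊓
          Submodule.comap (LinearMap.fst K _ _)
            (Submodule.map (dX K d r i) (cochX K d r a i)) ≤
        Submodule.map (dCone K d j r i) (cochY K d j r a i)) := by
  have hd1 : j < d + 1 := by omega
  have hdd : d < d + 1 := Nat.lt_succ_self d
  refine ⟨?_, ?_, ?_, ?_⟩
  · -- ============ statement 1 ============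
    intro _
    rw [Submodule.eq_bot_iff]
    rintro ⟨x, u⟩ hm
    rw [cocycY, Submodule.mem_inf] at hm
    obtain ⟨_, hk⟩ := hm
    rw [LinearMap.mem_ker, dCone_apply, Prod.mk_eq_zero] at hk
    obtain ⟨hk1, hk2⟩ := hk
    rw [dU_zero_apply, sub_zero] at hk2
    have hw0 : ∀ (h : ({(⟨d, hdd⟩ : Fin (d + 1))} : Finset (Fin (d + 1))).card = 0 + 1),
        x ⟨{⟨d, hdd⟩}, h⟩ = 0 := by
      intro h
      have := congrFun hk2 ⟨{⟨d, hdd⟩}, h, one_pos, fun i hi => by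
        rw [Finset.mem_singleton] at hi; subst hi; exact hj⟩
      exact this
    have hx0 : x = 0 := by
      funext T
      obtain ⟨v, hv⟩ := Finset.card_eq_one.mp T.2
      have hT : T = ⟨{v}, by rw [← hv]; exact T.2⟩ := Subtype.ext hv
      rcases eq_or_ne v ⟨d, hdd⟩ with rfl | hne
      · rw [hT]; exact hw0 _
      · have hcard : ({v, ⟨d, hdd⟩} : Finset (Fin (d + 1))).card = 0 + 1 + 1 := by
          rw [Finset.card_pair hne]
        have hD : (0 : Amb K d r)
            = sg K {v, ⟨d, hdd⟩} v • extX 0 x {(⟨d, hdd⟩ : Fin (d + 1))}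
              + sg K {v, ⟨d, hdd⟩} ⟨d, hdd⟩ • extX 0 x {v} := by
          rw [← DD_pair (extX 0 x) hne, ← dX_apply 0 x ⟨{v, ⟨d, hdd⟩}, hcard⟩, hk1]
          rfl
        have hew : extX 0 x {(⟨d, hdd⟩ : Fin (d + 1))} = 0 := by
          rw [extX, dif_pos (Finset.card_singleton _)]
          exact hw0 _
        rw [hew, smul_zero, zero_add] at hD
        have hev : extX 0 x {v} = 0 := by
          rcases smul_eq_zero.mp hD.symm with h | h
          · exact absurd h (sg_ne_zero _ _ _)
          · exact h
        rw [extX, dif_pos (Finset.card_singleton v)] at hev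
        rw [hT]
        exact hev
    have hu0 : u = 0 := funext fun T => (Nat.lt_irrefl 0 T.2.2.1).elim
    exact Prod.ext_iff.mpr ⟨hx0, hu0⟩
  · -- ============ statement 2 ============
    intro i hij
    rintro ⟨x, u⟩ hm
    rw [cocycY, Submodule.mem_inf] at hm
    obtain ⟨hch, hk⟩ := hm
    rw [cochY, Submodule.mem_prod] at hch
    obtain ⟨hxc, huc⟩ := hch
    rw [LinearMap.mem_ker, dCone_apply, Prod.mk_eq_zero] at hk
    obtain ⟨hk1, hk2⟩ := hk
    have hk2' : ∀ T : IdxU d j (i + 2), dU K d j r (i + 1) u T = x ⟨T.1, T.2.1⟩ := by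
      intro T
      have h := congrFun hk2 T
      simp only [Pi.sub_apply, Pi.zero_apply, sub_eq_zero] at h
      exact h.symm
    -- the contracted X-cochain
    have L1 : ∀ (A : Finset (Fin (d + 1))) (hA : A.card = i + 1 + 1),
        DD (kone Finset.univ (extX (i + 1) x)) A = x ⟨A, hA⟩ := by
      intro A hA
      have hxA : extX (i + 1) x A = x ⟨A, hA⟩ := dif_pos hA
      have hres := DD_kone Finset.univ (extX (i + 1) x) A ?_ ?_
      · rw [hres, hxA]
      · -- coverage
        intro t μ hμ
        rw [hxA] at hμ
        have hv' : ∃ v, v ∉ A := by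
          by_contra hcon
          push_neg at hcon
          have hA' : A = Finset.univ := Finset.eq_univ_iff_forall.mpr hcon
          rw [hA', Finset.card_univ, Fintype.card_fin] at hA
          omega
        obtain ⟨v0, hv0⟩ := hv'
        have hsec := Submodule.mem_pi.mp hxc ⟨A, hA⟩ (Set.mem_univ _)
        exact ⟨v0, Finset.mem_univ v0, ((mem_secW_iff (a := a)).mp hsec t μ hμ).1 v0 hv0⟩
      · -- cocycle
        intro v _ hvA
        have hcd : (insert v A).card = i + 1 + 1 + 1 := by
          rw [Finset.card_insert_of_notMem hvA, hA]
        have h := dX_apply (i + 1) x ⟨insert v A, hcd⟩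
        rw [hk1] at h
        exact h.symm
    have L2 : ∀ (A : Finset (Fin (d + 1))), A.card = i + 1 →
        kone Finset.univ (extX (i + 1) x) A ∈ secW K d r a A := by
      intro A hA
      refine kone_mem_secW a Finset.univ _ A fun v _ hvA => ?_
      have hcd : (insert v A).card = i + 1 + 1 := by
        rw [Finset.card_insert_of_notMem hvA, hA]
      rw [extX, dif_pos hcd]
      exact Submodule.mem_pi.mp hxc ⟨insert v A, hcd⟩ (Set.mem_univ _)
    have L3 : ∀ (A : Finset (Fin (d + 1))) (hA : A.card = i + 1 + 1)
        (hAj : ∀ b ∈ A, j < (b : ℕ)),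
        DD (fun B => kone Finset.univ (extX (i + 1) x) B - extU j (i + 1) u B) A = 0 := by
      intro A hA hAj
      rw [DD_sub]
      have hT : (A.card = i + 2 ∧ 0 < i + 2 ∧ ∀ b ∈ A, j < (b : ℕ)) :=
        ⟨by omega, by omega, hAj⟩
      have h2 := dU_apply j (i + 1) (by omega) u ⟨A, hT⟩
      rw [L1 A hA, ← h2, hk2' ⟨A, hT⟩, sub_self]
    -- membership of extU-values
    have LU : ∀ (A : Finset (Fin (d + 1))), (A.card = i + 1) → (∀ b ∈ A, j < (b : ℕ)) →
        extU j (i + 1) u A ∈ secW K d r a A := by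
      intro A hA hAj
      rw [extU, dif_pos ⟨hA, by omega, hAj⟩]
      exact Submodule.mem_pi.mp huc ⟨A, hA, by omega, hAj⟩ (Set.mem_univ _)
    rcases Nat.eq_zero_or_pos i with rfl | hi0
    · -- -------- subcase i = 0 --------
      set w0 : Fin (d + 1) := ⟨d, hdd⟩ with hw0def
      have hjw0 : j < (w0 : ℕ) := hj
      have zsing : ∀ k : Fin (d + 1), j < (k : ℕ) →
          (kone Finset.univ (extX 1 x) {k} - extU j 1 u {k})
            = kone Finset.univ (extX 1 x) {w0} - extU j 1 u {w0} := by
        intro k hk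
        rcases eq_or_ne k w0 with rfl | hne
        · rfl
        · have hc2 : ({k, w0} : Finset (Fin (d + 1))).card = 0 + 1 + 1 := by
            rw [Finset.card_pair hne]
          have hDz := L3 {k, w0} hc2 (by
            intro b hb
            rcases Finset.mem_insert.mp hb with rfl | hb
            · exact hk
            · rw [Finset.mem_singleton.mp hb]; exact hjw0)
          rw [DD_pair _ hne] at hDz
          exact pair_eq hne hDz
      have hmem1 : ∀ k : Fin (d + 1), j < (k : ℕ) →
          (kone Finset.univ (extX 1 x) {k} - extU j 1 u {k}) ∈ secW K d r a {k} := by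
        intro k hk
        exact sub_mem (L2 {k} (Finset.card_singleton k))
          (LU {k} (Finset.card_singleton k)
            (fun b hb => by rw [Finset.mem_singleton.mp hb]; exact hk))
      set m : Amb K d r := kone Finset.univ (extX 1 x) {w0} - extU j 1 u {w0} with hmdef
      have msec : ∀ T : Finset (Fin (d + 1)), m ∈ secW K d r a T := by
        intro T
        set w1 : Fin (d + 1) := ⟨j + 1, by omega⟩ with hw1def
        have hjw1 : j < (w1 : ℕ) := Nat.lt_succ_self j
        have hne10 : w1 ≠ w0 := by
          simp only [hw1def, hw0def, ne_eq, Fin.mk.injEq]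
          omega
        have hm0 : m ∈ secW K d r a {w0} := hmem1 w0 hjw0
        have hm1 : m ∈ secW K d r a {w1} := by
          rw [← zsing w1 hjw1]
          exact hmem1 w1 hjw1
        rw [mem_secW_iff (a := a)]
        intro t μ hμ
        have h0 := (mem_secW_iff (a := a)).mp hm0 t μ hμ
        have h1 := (mem_secW_iff (a := a)).mp hm1 t μ hμ
        refine ⟨?_, h0.2⟩
        intro b _
        rcases eq_or_ne b w0 with rfl | hbw
        · exact h1.1 w0 (by
            intro hb
            exact hne10 (Finset.mem_singleton.mp hb).symm)
        · exact h0.1 b (fun hb => hbw (Finset.mem_singleton.mp hb))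
      refine Submodule.mem_map.mpr ⟨(fun T : IdxX d 0 => kone Finset.univ (extX 1 x) T.1 - m,
        (0 : IdxU d j 0 → Amb K d r)), ?_, ?_⟩
      · rw [cochY, Submodule.mem_prod]
        refine ⟨Submodule.mem_pi.mpr fun T _ => sub_mem (L2 T.1 T.2) (msec T.1),
          Submodule.zero_mem _⟩
      · have hfst : dX K d r 0 (fun T : IdxX d 0 => kone Finset.univ (extX 1 x) T.1 - m)
            = x := by
          have hsplit : (fun T : IdxX d 0 => kone Finset.univ (extX 1 x) T.1 - m)
              = (fun T : IdxX d 0 => kone Finset.univ (extX 1 x) T.1)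
                - (fun _ : IdxX d 0 => m) := rfl
          rw [hsplit, map_sub]
          have hc' : dX K d r 0 (fun T : IdxX d 0 => kone Finset.univ (extX 1 x) T.1) = x := by
            funext T
            rw [dX_apply]
            have he : DD (extX 0 fun T : IdxX d 0 => kone Finset.univ (extX 1 x) T.1) T.1
                = DD (kone Finset.univ (extX 1 x)) T.1 := by
              refine DD_congr fun y hy => ?_
              have hcd : (T.1.erase y).card = 0 + 1 := by
                rw [Finset.card_erase_of_mem hy, T.2]
              rw [extX, dif_pos hcd]
            rw [he, L1 T.1 T.2]
            exact congrArg x (Subtype.ext rfl)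
          have hm' : dX K d r 0 (fun _ : IdxX d 0 => m) = 0 := by
            funext T
            rw [dX_apply]
            obtain ⟨v, w', hne, hT⟩ := Finset.card_eq_two.mp T.2
            have he : ∀ B : Finset (Fin (d + 1)), B.card = 1 →
                extX 0 (fun _ : IdxX d 0 => m) B = m := fun B hB => dif_pos hB
            rw [hT, DD_pair _ hne, he {w'} (Finset.card_singleton w'),
              he {v} (Finset.card_singleton v), ← add_smul, sg_pair_add hne, zero_smul]
            rfl
          rw [hc', hm', sub_zero]
        rw [dCone_apply, Prod.mk.injEq]
        refine ⟨hfst, ?_⟩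
        rw [map_zero, sub_zero]
        funext T
        obtain ⟨k, hk⟩ := Finset.card_eq_one.mp T.2.1
        have hjk : j < (k : ℕ) := T.2.2.2 k (by rw [hk]; exact Finset.mem_singleton_self k)
        rw [resXU_apply]
        show kone Finset.univ (extX 1 x) T.1 - m = u T
        rw [hk, ← zsing k hjk]
        have huk : extU j 1 u {k} = u T := by
          have hcond : (({k} : Finset (Fin (d + 1))).card = 1 ∧ 0 < 1 ∧
              ∀ b ∈ ({k} : Finset (Fin (d + 1))), j < (b : ℕ)) :=
            ⟨Finset.card_singleton k, one_pos,
              fun b hb => by rw [Finset.mem_singleton.mp hb]; exact hjk⟩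
          have hTeq : T = ⟨{k}, hcond⟩ := Subtype.ext hk
          rw [extU, dif_pos hcond, hTeq]
        rw [← huk]
        abel
    · -- -------- subcase 0 < i --------
      have hdUw : ∀ T : IdxU d j (i + 1),
          dU K d j r i (fun T : IdxU d j i =>
            kone (SU j) (fun B => kone Finset.univ (extX (i + 1) x) B - extU j (i + 1) u B) T.1)
            T
          = kone Finset.univ (extX (i + 1) x) T.1 - extU j (i + 1) u T.1 := by
        intro T
        rw [dU_apply j i hi0]
        have he : DD (extU j i (fun T : IdxU d j i =>
            kone (SU j) (fun B => kone Finset.univ (extX (i + 1) x) B - extU j (i + 1) u B) T.1))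
            T.1
            = DD (kone (SU j)
                (fun B => kone Finset.univ (extX (i + 1) x) B - extU j (i + 1) u B)) T.1 := by
          refine DD_congr fun y hy => ?_
          have hcond : ((T.1.erase y).card = i ∧ 0 < i ∧
              ∀ b ∈ T.1.erase y, j < (b : ℕ)) :=
            ⟨by rw [Finset.card_erase_of_mem hy, T.2.1]; omega, hi0,
              fun b hb => T.2.2.2 b (Finset.mem_of_mem_erase hb)⟩
          rw [extU, dif_pos hcond]
        rw [he]
        have hsubSU : T.1 ⊆ SU j := fun b hb => (mem_SU j).mpr (T.2.2.2 b hb)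
        have hzmem : (kone Finset.univ (extX (i + 1) x) T.1 - extU j (i + 1) u T.1)
            ∈ secW K d r a T.1 :=
          sub_mem (L2 T.1 T.2.1) (LU T.1 T.2.1 T.2.2.2)
        refine DD_kone (SU j) _ T.1 ?_ ?_
        · intro t μ hμ
          have hns : ¬ (SU j ⊆ T.1) := by
            intro hs
            have hcc := Finset.card_le_card hs
            rw [SU_card j hd1, T.2.1] at hcc
            omega
          obtain ⟨v, hvS, hvT⟩ := Finset.not_subset.mp hns
          exact ⟨v, hvS, ((mem_secW_iff (a := a)).mp hzmem t μ hμ).1 v hvT⟩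
        · intro v hvS hvT
          refine L3 (insert v T.1) (by rw [Finset.card_insert_of_notMem hvT, T.2.1]) ?_
          intro b hb
          rcases Finset.mem_insert.mp hb with rfl | hb
          · exact (mem_SU j).mp hvS
          · exact T.2.2.2 b hb
      refine Submodule.mem_map.mpr ⟨(fun T : IdxX d i => kone Finset.univ (extX (i + 1) x) T.1,
        fun T : IdxU d j i =>
          kone (SU j) (fun B => kone Finset.univ (extX (i + 1) x) B - extU j (i + 1) u B) T.1),
        ?_, ?_⟩
      · rw [cochY, Submodule.mem_prod]
        constructor
        · exact Submodule.mem_pi.mpr fun T _ => L2 T.1 T.2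
        · refine Submodule.mem_pi.mpr fun T _ => ?_
          refine kone_mem_secW a (SU j) _ T.1 fun v hvS hvT => ?_
          have hcd : (insert v T.1).card = i + 1 := by
            rw [Finset.card_insert_of_notMem hvT, T.2.1]
          refine sub_mem (L2 _ hcd) (LU _ hcd ?_)
          intro b hb
          rcases Finset.mem_insert.mp hb with rfl | hb
          · exact (mem_SU j).mp hvS
          · exact T.2.2.2 b hb
      · have hfst : dX K d r i (fun T : IdxX d i => kone Finset.univ (extX (i + 1) x) T.1)
            = x := by
          funext T
          rw [dX_apply]
          have he : DD (extX i fun T : IdxX d i => kone Finset.univ (extX (i + 1) x) T.1) T.1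
              = DD (kone Finset.univ (extX (i + 1) x)) T.1 := by
            refine DD_congr fun y hy => ?_
            have hcd : (T.1.erase y).card = i + 1 := by
              rw [Finset.card_erase_of_mem hy, T.2]
              omega
            rw [extX, dif_pos hcd]
          rw [he, L1 T.1 T.2]
          exact congrArg x (Subtype.ext rfl)
        rw [dCone_apply, Prod.mk.injEq]
        refine ⟨hfst, ?_⟩
        funext T
        rw [Pi.sub_apply, hdUw T, resXU_apply]
        show kone Finset.univ (extX (i + 1) x) T.1
            - (kone Finset.univ (extX (i + 1) x) T.1 - extU j (i + 1) u T.1) = u T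
        have huT : extU j (i + 1) u T.1 = u T := by
          rw [extU, dif_pos T.2]
          exact congrArg u (Subtype.ext rfl)
        rw [← huT]
        abel
  · -- ============ statement 3 ============
    intro i hi x hx
    rw [cocycX, Submodule.mem_inf] at hx
    refine Submodule.mem_sup_left (Submodule.mem_map.mpr ⟨(x, 0), ?_, rfl⟩)
    rw [cocycY, Submodule.mem_inf]
    constructor
    · rw [cochY, Submodule.mem_prod]
      exact ⟨hx.1, Submodule.zero_mem _⟩
    · rw [LinearMap.mem_ker, dCone_apply, Prod.mk_eq_zero]
      refine ⟨LinearMap.mem_ker.mp hx.2, ?_⟩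
      exact funext fun T => (idxU_elim j hd1 (by omega) T).elim
  · -- ============ statement 4 ============
    intro i hi xu hxu
    rw [Submodule.mem_inf] at hxu
    obtain ⟨_, hcm⟩ := hxu
    rw [Submodule.mem_comap] at hcm
    obtain ⟨c, hc, hdc⟩ := Submodule.mem_map.mp hcm
    refine Submodule.mem_map.mpr ⟨(c, 0), ?_, ?_⟩
    · rw [cochY, Submodule.mem_prod]
      exact ⟨hc, Submodule.zero_mem _⟩
    · rw [dCone_apply, Prod.ext_iff]
      refine ⟨hdc, ?_⟩
      exact funext fun T => (idxU_elim j hd1 (by omega) T).elim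


end
end

section
/- Let F be a finitely generated graded module over S = K[X_0, ..., X_d] which is projective, and let 0 ≤ j ≤ d−2. Then the degree-zero part of the direct limit colim_n F/(X_{j+1}^n, ..., X_d^n)F (with transition maps given by multiplication by X_{j+1}⋯X_d and twisted grading deg([f]) − n(d−j)) is isomorphic to H^{d−j−1}(P^d ∖ P^j, ~F), the top cohomology of the associated sheaf on the complement of P^j = V(X_{j+1},...,X_d). -/
/-!
STATEMENT 7: for `F` a finitely generated graded projective `S`-module
(`S = K[X_0,…,X_d]`) and `0 ≤ j ≤ d−2`, the degree-zero part of
`colim_n F/(X_{j+1}^n,…,X_d^n)F` (transition maps given by multiplication by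
`X_{j+1}⋯X_d`, with twisted grading `deg([f]) − n(d−j)`) is isomorphic to
`H^{d−j−1}(P^d ∖ P^j, ~F)`.

Model (as licensed by the context): a f.g. graded projective module over the
polynomial ring is graded free, `F = ⊕_t S(a_t)`, encoded by twists
`a : Fin r → ℤ`.  Via generalized fractions, the degree-zero part of
`F/(X_{j+1}^n,…,X_d^n)F` is the span `Q n` of Laurent monomials with exponents
`≥ 0` on `X_0,…,X_j`, exponents in `[−n, 0)` on `X_{j+1},…,X_d`, and total
degree `a_t` in component `t`; the transition maps (multiplication by
`X_{j+1}⋯X_d` in generalized-fraction form) become the inclusions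
`Q m ≤ Q n`.  The top cohomology `H^{d−j−1}(P^d ∖ P^j, ~F)` of the complement,
computed by the Čech complex of the localizations `(F_{X_{k_1}⋯X_{k_s}})^0`,
is the quotient of the full localization piece by the sum of the partial ones.
The statement: the direct limit of the `Q n` is isomorphic to this quotient.
-/

open Finsupp

set_option maxHeartbeats 1600000

noncomputable section

variable (K : Type*) [Field K] (d j r : ℕ) (a : Fin r → ℤ)

/-- The degree-zero part of `F/(X_{j+1}^n,…,X_d^n)F`, in generalized-fraction
form: exponents `≥ 0` on `X_0,…,X_j`, in `[−n, 0)` on `X_{j+1},…,X_d`, total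
degree `a_t` in component `t`. -/
def fracQ (n : ℕ) : Submodule K (Amb K d r) :=
  Submodule.span K {x | ∃ (t : Fin r) (μ : Fin (d + 1) → ℤ),
    (∀ i : Fin (d + 1), (i : ℕ) ≤ j → 0 ≤ μ i) ∧
    (∀ i : Fin (d + 1), j < (i : ℕ) → -(n : ℤ) ≤ μ i ∧ μ i < 0) ∧
    (∑ i, μ i) = a t ∧ x = Pi.single t (Finsupp.single μ (1 : K))}

lemma fracQ_mono {m n : ℕ} (hmn : m ≤ n) : fracQ K d j r a m ≤ fracQ K d j r a n := by
  refine Submodule.span_mono ?_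
  rintro x ⟨t, μ, h1, h2, h3, rfl⟩
  refine ⟨t, μ, h1, fun i hi => ⟨le_trans ?_ (h2 i hi).1, (h2 i hi).2⟩, h3, rfl⟩
  have : (m : ℤ) ≤ (n : ℤ) := by exact_mod_cast hmn
  omega

/-- The transition maps of the direct system (inclusions, corresponding to
multiplication by `X_{j+1}⋯X_d` on generalized fractions). -/
def fracMap : ∀ m n : ℕ, m ≤ n → (fracQ K d j r a m →ₗ[K] fracQ K d j r a n) :=
  fun _ _ h => Submodule.inclusion (fracQ_mono K d j r a h)

/-- `(F_{X_{j+1}⋯X_d})^0`: monomials with nonnegative exponents on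
`X_0,…,X_j`. -/
def locFull : Submodule K (Amb K d r) :=
  Submodule.span K {x | ∃ (t : Fin r) (μ : Fin (d + 1) → ℤ),
    (∀ i : Fin (d + 1), (i : ℕ) ≤ j → 0 ≤ μ i) ∧ (∑ i, μ i) = a t ∧
    x = Pi.single t (Finsupp.single μ (1 : K))}

/-- The sum of the images of the partial localizations
`(F_{X_{j+1}⋯\hat{X_k}⋯X_d})^0`, `j < k ≤ d`: the image of the last Čech
differential. -/
def locPartial : Submodule K (Amb K d r) :=
  Submodule.span K {x | ∃ (t : Fin r) (μ : Fin (d + 1) → ℤ) (k : Fin (d + 1)),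
    j < (k : ℕ) ∧ (∀ i : Fin (d + 1), ((i : ℕ) ≤ j ∨ i = k) → 0 ≤ μ i) ∧
    (∑ i, μ i) = a t ∧ x = Pi.single t (Finsupp.single μ (1 : K))}

/-- The standard monomial basis of `Amb`. -/
def ambBasis : Module.Basis (Fin r × (Fin (d + 1) → ℤ)) K (Amb K d r) :=
  (Pi.basis fun _ : Fin r => Finsupp.basisSingleOne).reindex (Equiv.sigmaEquivProd _ _)

lemma ambBasis_apply (t : Fin r) (μ : Fin (d + 1) → ℤ) :
    ambBasis K d r (t, μ) = Pi.single t (Finsupp.single μ (1 : K)) := by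
  classical
  simp [ambBasis, Module.Basis.reindex_apply, Equiv.sigmaEquivProd, Pi.basis_apply,
    Finsupp.coe_basisSingleOne]

/-- Index set of the basis monomials spanning `fracQ n`. -/
def idxQ (n : ℕ) : Set (Fin r × (Fin (d + 1) → ℤ)) :=
  {p | (∀ i : Fin (d + 1), (i : ℕ) ≤ j → 0 ≤ p.2 i) ∧
    (∀ i : Fin (d + 1), j < (i : ℕ) → -(n : ℤ) ≤ p.2 i ∧ p.2 i < 0) ∧
    (∑ i, p.2 i) = a p.1}

def idxFull : Set (Fin r × (Fin (d + 1) → ℤ)) :=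
  {p | (∀ i : Fin (d + 1), (i : ℕ) ≤ j → 0 ≤ p.2 i) ∧ (∑ i, p.2 i) = a p.1}

def idxPartial : Set (Fin r × (Fin (d + 1) → ℤ)) :=
  {p | ∃ k : Fin (d + 1), j < (k : ℕ) ∧
    (∀ i : Fin (d + 1), ((i : ℕ) ≤ j ∨ i = k) → 0 ≤ p.2 i) ∧ (∑ i, p.2 i) = a p.1}

lemma fracQ_eq (n : ℕ) :
    fracQ K d j r a n = Submodule.span K (ambBasis K d r '' idxQ d j r a n) := by
  unfold fracQ
  congr 1
  ext x
  constructor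
  · rintro ⟨t, μ, h1, h2, h3, rfl⟩
    exact ⟨(t, μ), ⟨h1, h2, h3⟩, (ambBasis_apply K d r t μ)⟩
  · rintro ⟨⟨t, μ⟩, ⟨h1, h2, h3⟩, rfl⟩
    exact ⟨t, μ, h1, h2, h3, (ambBasis_apply K d r t μ)⟩

lemma locFull_eq :
    locFull K d j r a = Submodule.span K (ambBasis K d r '' idxFull d j r a) := by
  unfold locFull
  congr 1
  ext x
  constructor
  · rintro ⟨t, μ, h1, h3, rfl⟩
    exact ⟨(t, μ), ⟨h1, h3⟩, (ambBasis_apply K d r t μ)⟩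
  · rintro ⟨⟨t, μ⟩, ⟨h1, h3⟩, rfl⟩
    exact ⟨t, μ, h1, h3, (ambBasis_apply K d r t μ)⟩

lemma locPartial_eq :
    locPartial K d j r a = Submodule.span K (ambBasis K d r '' idxPartial d j r a) := by
  unfold locPartial
  congr 1
  ext x
  constructor
  · rintro ⟨t, μ, k, hk, h1, h3, rfl⟩
    exact ⟨(t, μ), ⟨k, hk, h1, h3⟩, (ambBasis_apply K d r t μ)⟩
  · rintro ⟨⟨t, μ⟩, ⟨k, hk, h1, h3⟩, rfl⟩
    exact ⟨t, μ, k, hk, h1, h3, (ambBasis_apply K d r t μ)⟩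

/-- The union of all the `Q n`. -/
def fracSup : Submodule K (Amb K d r) := ⨆ n : ℕ, fracQ K d j r a n

lemma fracSup_eq :
    fracSup K d j r a = Submodule.span K (ambBasis K d r '' ⋃ n : ℕ, idxQ d j r a n) := by
  rw [Set.image_iUnion, Submodule.span_iUnion, fracSup]
  exact iSup_congr fun n => fracQ_eq K d j r a n

lemma idx_disjoint :
    Disjoint (⋃ n : ℕ, idxQ d j r a n) (idxPartial d j r a) := by
  rw [Set.disjoint_left]
  rintro p hp hp'
  obtain ⟨n, hn⟩ := Set.mem_iUnion.1 hp
  obtain ⟨k, hk, h1, -⟩ := hp'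
  exact absurd (h1 k (Or.inr rfl)) (not_le.2 (hn.2.1 k hk).2)

lemma fracSup_disjoint_locPartial :
    Disjoint (fracSup K d j r a) (locPartial K d j r a) := by
  rw [fracSup_eq, locPartial_eq, Submodule.disjoint_def]
  intro x hx hx'
  rw [Module.Basis.mem_span_image] at hx hx'
  have hsupp : ((ambBasis K d r).repr x).support = ∅ := by
    by_contra h
    obtain ⟨p, hp⟩ := Finset.nonempty_of_ne_empty h
    exact Set.disjoint_left.1 (idx_disjoint d j r a) (hx hp) (hx' hp)
  have : (ambBasis K d r).repr x = 0 := Finsupp.support_eq_empty.1 hsupp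
  simpa using congrArg (ambBasis K d r).repr.symm this

lemma fracSup_le_locFull : fracSup K d j r a ≤ locFull K d j r a := by
  rw [fracSup_eq, locFull_eq]
  refine Submodule.span_mono (Set.image_mono ?_)
  rintro p hp
  obtain ⟨n, hn⟩ := Set.mem_iUnion.1 hp
  exact ⟨hn.1, hn.2.2⟩

lemma locFull_le_sup :
    locFull K d j r a ≤ fracSup K d j r a ⊔ locPartial K d j r a := by
  rw [locFull_eq, fracSup_eq, locPartial_eq, ← Submodule.span_union, ← Set.image_union]
  refine Submodule.span_mono (Set.image_mono ?_)
  rintro ⟨t, μ⟩ ⟨h1, h3⟩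
  by_cases h : ∃ k : Fin (d + 1), j < (k : ℕ) ∧ 0 ≤ μ k
  · obtain ⟨k, hk, hk0⟩ := h
    refine Or.inr ⟨k, hk, fun i hi => ?_, h3⟩
    rcases hi with hi | rfl
    · exact h1 i hi
    · exact hk0
  · push_neg at h
    refine Or.inl (Set.mem_iUnion.2 ⟨Finset.univ.sup fun i => (μ i).natAbs, h1,
      fun i hi => ⟨?_, h i hi⟩, h3⟩)
    have hle : (μ i).natAbs ≤ Finset.univ.sup fun i => (μ i).natAbs :=
      Finset.le_sup (f := fun i => (μ i).natAbs) (Finset.mem_univ i)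
    show -(↑(Finset.univ.sup fun i => (μ i).natAbs) : ℤ) ≤ μ i
    omega

/-- The map from the union into the quotient by `locPartial`. -/
def toQuot : fracSup K d j r a →ₗ[K] (Amb K d r) ⧸ locPartial K d j r a :=
  (Submodule.mkQ (locPartial K d j r a)).comp (fracSup K d j r a).subtype

lemma toQuot_injective : Function.Injective (toQuot K d j r a) := by
  intro x y h
  have hmem : (x : Amb K d r) - y ∈ locPartial K d j r a := by
    rw [← Submodule.Quotient.eq]
    exact h
  have hsup : (x : Amb K d r) - y ∈ fracSup K d j r a := sub_mem x.2 y.2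
  have := (Submodule.disjoint_def.1 (fracSup_disjoint_locPartial K d j r a)) _ hsup hmem
  exact Subtype.ext (sub_eq_zero.1 this)

lemma toQuot_range :
    LinearMap.range (toQuot K d j r a) =
      Submodule.map (Submodule.mkQ (locPartial K d j r a)) (locFull K d j r a) := by
  rw [toQuot, LinearMap.range_comp, Submodule.range_subtype]
  apply le_antisymm
  · exact Submodule.map_mono (fracSup_le_locFull K d j r a)
  · intro y hy
    obtain ⟨x, hx, rfl⟩ := hy
    have := locFull_le_sup K d j r a hx
    obtain ⟨u, hu, v, hv, rfl⟩ := Submodule.mem_sup.1 this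
    refine ⟨u, hu, ?_⟩
    simp [map_add, (Submodule.Quotient.mk_eq_zero _).2 hv]

/-- The direct limit maps onto the union. -/
def dlToSup :
    Module.DirectLimit (fun n : ℕ => fracQ K d j r a n) (fracMap K d j r a) →ₗ[K]
      Amb K d r :=
  Module.DirectLimit.lift K ℕ _ _ (fun n => (fracQ K d j r a n).subtype)
    (fun i k h x => show (fracQ K d j r a k).subtype (fracMap K d j r a i k h x) =
      (fracQ K d j r a i).subtype x from rfl)

lemma dlToSup_injective : Function.Injective (dlToSup K d j r a) :=
  Module.DirectLimit.lift_injective _ _ (fun n => Subtype.val_injective)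

lemma dlToSup_range : LinearMap.range (dlToSup K d j r a) = fracSup K d j r a := by
  apply le_antisymm
  · rintro y ⟨z, rfl⟩
    induction z using Module.DirectLimit.induction_on with
    | ih n x =>
      rw [dlToSup, Module.DirectLimit.lift_of]
      exact Submodule.mem_iSup_of_mem n x.2
  · refine iSup_le fun n => fun x hx => ?_
    refine ⟨Module.DirectLimit.of K ℕ (fun m => ↥(fracQ K d j r a m))
      (fracMap K d j r a) n ⟨x, hx⟩, ?_⟩
    show dlToSup K d j r a _ = x
    rw [dlToSup, Module.DirectLimit.lift_of]
    rfl

/-- The composite equivalence. -/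
def stmt7Equiv :
    (Module.DirectLimit (fun n : ℕ => fracQ K d j r a n) (fracMap K d j r a)) ≃ₗ[K]
      ↥(Submodule.map (Submodule.mkQ (locPartial K d j r a)) (locFull K d j r a)) :=
  ((LinearEquiv.ofInjective _ (dlToSup_injective K d j r a)).trans
    (LinearEquiv.ofEq _ _ (dlToSup_range K d j r a))).trans
    ((LinearEquiv.ofInjective _ (toQuot_injective K d j r a)).trans
      (LinearEquiv.ofEq _ _ (toQuot_range K d j r a)))

theorem stmt7 (hj : j + 2 ≤ d) :
    Nonempty
      ((Module.DirectLimit (fun n : ℕ => fracQ K d j r a n) (fracMap K d j r a)) ≃ₗ[K]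
        ↥(Submodule.map (Submodule.mkQ (locPartial K d j r a)) (locFull K d j r a))) := by
  exact ⟨stmt7Equiv K d j r a⟩

end
end

section
/- Let 0 → V¹_n → V²_n → V³_n → 0 (n ∈ ℕ) be an inverse system of exact sequences of Banach spaces over a complete nonarchimedean field K, with continuous maps, such that the transition maps V¹_{n+1} → V¹_n have dense image. Then the sequence of inverse limits 0 → lim V¹_n → lim V²_n → lim V³_n → 0 is exact. -/
/-!
STATEMENT 8 (topological Mittag-Leffler): let
`0 → V¹_n → V²_n → V³_n → 0` (n ∈ ℕ) be an inverse system of exact sequences of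
Banach spaces over a complete nonarchimedean field `K`, with continuous maps,
such that the transition maps `V¹_{n+1} → V¹_n` have dense image.  Then the
sequence of inverse limits `0 → lim V¹_n → lim V²_n → lim V³_n → 0` is exact.

The inverse limits are realized as the compatible-families submodules of the
products, and exactness of the limit sequence is stated componentwise:
injectivity on the left, exactness in the middle, and surjectivity on the
right.
-/

open Filter Finset

noncomputable def MLapprox {K : Type*} [NontriviallyNormedField K]
    {V : ℕ → Type*} [∀ n, NormedAddCommGroup (V n)] [∀ n, NormedSpace K (V n)]
    (t : ∀ n, V (n + 1) →L[K] V n) (c x : ∀ n, V n) : ∀ (m n : ℕ), V n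
  | m, n => if _ : m ≤ n then c n else x n + t n (MLapprox t c x m (n + 1))
  termination_by m n => m - n
  decreasing_by omega

theorem MLapprox_of_le {K : Type*} [NontriviallyNormedField K]
    {V : ℕ → Type*} [∀ n, NormedAddCommGroup (V n)] [∀ n, NormedSpace K (V n)]
    (t : ∀ n, V (n + 1) →L[K] V n) (c x : ∀ n, V n) {m n : ℕ} (h : m ≤ n) :
    MLapprox t c x m n = c n := by
  rw [MLapprox]; simp [h]

theorem MLapprox_of_lt {K : Type*} [NontriviallyNormedField K]
    {V : ℕ → Type*} [∀ n, NormedAddCommGroup (V n)] [∀ n, NormedSpace K (V n)]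
    (t : ∀ n, V (n + 1) →L[K] V n) (c x : ∀ n, V n) {m n : ℕ} (h : n < m) :
    MLapprox t c x m n = x n + t n (MLapprox t c x m (n + 1)) := by
  rw [MLapprox]; simp [Nat.not_le.mpr h]

theorem ML_lim1 {K : Type*} [NontriviallyNormedField K]
    {V : ℕ → Type*} [∀ n, NormedAddCommGroup (V n)] [∀ n, NormedSpace K (V n)]
    [∀ n, CompleteSpace (V n)]
    (t : ∀ n, V (n + 1) →L[K] V n) (hdense : ∀ n, DenseRange (t n))
    (x : ∀ n, V n) :
    ∃ a : ∀ n, V n, ∀ n, a n = x n + t n (a (n + 1)) := by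
  classical
  set C : ℕ → ℝ := fun m => ∏ k ∈ Finset.range m, max 1 ‖t k‖ with hC
  have hge1 : ∀ (s : Finset ℕ), (1 : ℝ) ≤ ∏ k ∈ s, max 1 ‖t k‖ := by
    intro s
    calc (1 : ℝ) = ∏ k ∈ s, 1 := (Finset.prod_const_one).symm
      _ ≤ ∏ k ∈ s, max 1 ‖t k‖ :=
          Finset.prod_le_prod (fun i _ => zero_le_one) (fun i _ => le_max_left _ _)
  have hC1 : ∀ m, 1 ≤ C m := fun m => hge1 _
  have hCpos : ∀ m, 0 < C m := fun m => lt_of_lt_of_le one_pos (hC1 m)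
  set δ : ℕ → ℝ := fun m => (1 / 2 : ℝ) ^ m / C m with hδdef
  have hδpos : ∀ m, 0 < δ m := fun m => div_pos (by positivity) (hCpos m)
  let c : ∀ n, V n := fun n =>
    Nat.rec (motive := V) 0
      (fun k ck => ((hdense k).exists_dist_lt (ck - x k) (hδpos k)).choose) n
  have hc : ∀ k, ‖x k + t k (c (k + 1)) - c k‖ < δ k := by
    intro k
    have h := ((hdense k).exists_dist_lt (c k - x k) (hδpos k)).choose_spec
    have h2 : dist (c k - x k) (t k (c (k + 1))) < δ k := h
    rw [dist_eq_norm] at h2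
    have heq : x k + t k (c (k + 1)) - c k = -(c k - x k - t k (c (k + 1))) := by abel
    rw [heq, norm_neg]
    exact h2
  have key : ∀ m j n, n + j = m →
      ‖MLapprox t c x (m + 1) n - MLapprox t c x m n‖
        ≤ (∏ k ∈ Finset.Ico n m, max 1 ‖t k‖) * δ m := by
    intro m j
    induction j with
    | zero =>
      intro n hn
      have hnm : n = m := by omega
      subst hnm
      rw [MLapprox_of_lt t c x (Nat.lt_succ_self n),
        MLapprox_of_le t c x (le_refl n),
        MLapprox_of_le t c x (le_refl (n + 1))]
      simp only [Finset.Ico_self, Finset.prod_empty, one_mul]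
      exact (hc n).le
    | succ j ih =>
      intro n hn
      have hlt : n < m := by omega
      have hn1 : n + 1 + j = m := by omega
      rw [MLapprox_of_lt t c x (by omega : n < m + 1), MLapprox_of_lt t c x hlt]
      have heq : x n + t n (MLapprox t c x (m + 1) (n + 1))
            - (x n + t n (MLapprox t c x m (n + 1)))
          = t n (MLapprox t c x (m + 1) (n + 1) - MLapprox t c x m (n + 1)) := by
        rw [map_sub]; abel
      rw [heq]
      calc ‖t n (MLapprox t c x (m + 1) (n + 1) - MLapprox t c x m (n + 1))‖
          ≤ ‖t n‖ * ‖MLapprox t c x (m + 1) (n + 1) - MLapprox t c x m (n + 1)‖ :=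
            (t n).le_opNorm _
        _ ≤ max 1 ‖t n‖ * ((∏ k ∈ Finset.Ico (n + 1) m, max 1 ‖t k‖) * δ m) := by
            apply mul_le_mul (le_max_right _ _) (ih (n + 1) hn1) (norm_nonneg _)
            exact le_trans zero_le_one (le_max_left _ _)
        _ = (∏ k ∈ Finset.Ico n m, max 1 ‖t k‖) * δ m := by
            rw [Finset.prod_eq_prod_Ico_succ_bot hlt, mul_assoc]
  have key2 : ∀ m n, n ≤ m →
      ‖MLapprox t c x (m + 1) n - MLapprox t c x m n‖ ≤ (1 / 2 : ℝ) ^ m := by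
    intro m n hnm
    have h1 : (∏ k ∈ Finset.Ico n m, max 1 ‖t k‖) ≤ C m := by
      have hsplit : (∏ k ∈ Finset.Ico 0 n, max 1 ‖t k‖)
          * (∏ k ∈ Finset.Ico n m, max 1 ‖t k‖) = ∏ k ∈ Finset.Ico 0 m, max 1 ‖t k‖ :=
        Finset.prod_Ico_consecutive _ (Nat.zero_le n) hnm
      have hr : C m = ∏ k ∈ Finset.Ico 0 m, max 1 ‖t k‖ := by
        rw [hC]; rw [Nat.Ico_zero_eq_range]
      rw [hr, ← hsplit]
      apply le_mul_of_one_le_left _ (hge1 _)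
      exact le_trans zero_le_one (hge1 _)
    calc ‖MLapprox t c x (m + 1) n - MLapprox t c x m n‖
        ≤ (∏ k ∈ Finset.Ico n m, max 1 ‖t k‖) * δ m := key m (m - n) n (by omega)
      _ ≤ C m * δ m := mul_le_mul_of_nonneg_right h1 (hδpos m).le
      _ = (1 / 2 : ℝ) ^ m := by
          rw [hδdef]
          field_simp
          exact mul_inv_cancel₀ (hCpos m).ne'
  have hcauchy : ∀ n, CauchySeq (fun m => MLapprox t c x (n + m) n) := by
    intro n
    apply cauchySeq_of_le_geometric (1 / 2 : ℝ) 1 (by norm_num)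
    intro m
    rw [dist_eq_norm, ← norm_neg, neg_sub]
    have he : n + (m + 1) = (n + m) + 1 := by omega
    rw [he]
    calc ‖MLapprox t c x ((n + m) + 1) n - MLapprox t c x (n + m) n‖
        ≤ (1 / 2 : ℝ) ^ (n + m) := key2 (n + m) n (by omega)
      _ ≤ 1 * (1 / 2 : ℝ) ^ m := by
          rw [one_mul, pow_add]
          calc (1/2:ℝ)^n * (1/2:ℝ)^m ≤ 1 * (1/2:ℝ)^m := by
                apply mul_le_mul_of_nonneg_right _ (by positivity)
                exact pow_le_one₀ (by norm_num) (by norm_num)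
            _ = (1/2:ℝ)^m := one_mul _
  have hlim : ∀ n, ∃ l, Tendsto (fun m => MLapprox t c x (n + m) n) atTop (nhds l) :=
    fun n => cauchySeq_tendsto_of_complete (hcauchy n)
  refine ⟨fun n => (hlim n).choose, fun n => ?_⟩
  have h1 : Tendsto (fun m => MLapprox t c x (n + m) n) atTop (nhds ((hlim n).choose)) :=
    (hlim n).choose_spec
  have h2 : Tendsto (fun m => MLapprox t c x (n + (m + 1)) n) atTop
      (nhds ((hlim n).choose)) := h1.comp (tendsto_add_atTop_nat 1)
  have h3 : ∀ m, MLapprox t c x (n + (m + 1)) n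
      = x n + t n (MLapprox t c x (n + 1 + m) (n + 1)) := by
    intro m
    rw [MLapprox_of_lt t c x (by omega : n < n + (m + 1))]
    have he : n + (m + 1) = n + 1 + m := by omega
    rw [he]
  rw [funext h3] at h2
  have h4 : Tendsto (fun m => x n + t n (MLapprox t c x (n + 1 + m) (n + 1))) atTop
      (nhds (x n + t n ((hlim (n + 1)).choose))) := by
    apply Tendsto.const_add
    exact ((t n).continuous.tendsto _).comp (hlim (n + 1)).choose_spec
  exact tendsto_nhds_unique h2 h4

theorem stmt8 (K : Type*) [NontriviallyNormedField K] [CompleteSpace K]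
    [IsUltrametricDist K]
    (V₁ V₂ V₃ : ℕ → Type*)
    [∀ n, NormedAddCommGroup (V₁ n)] [∀ n, NormedSpace K (V₁ n)]
    [∀ n, CompleteSpace (V₁ n)]
    [∀ n, NormedAddCommGroup (V₂ n)] [∀ n, NormedSpace K (V₂ n)]
    [∀ n, CompleteSpace (V₂ n)]
    [∀ n, NormedAddCommGroup (V₃ n)] [∀ n, NormedSpace K (V₃ n)]
    [∀ n, CompleteSpace (V₃ n)]
    -- the exact sequences 0 → V¹_n → V²_n → V³_n → 0
    (f : ∀ n, V₁ n →L[K] V₂ n) (g : ∀ n, V₂ n →L[K] V₃ n)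
    (hf_inj : ∀ n, Function.Injective (f n))
    (h_exact : ∀ n (y : V₂ n), g n y = 0 ↔ ∃ x, f n x = y)
    (hg_surj : ∀ n, Function.Surjective (g n))
    -- the transition maps of the inverse system
    (t₁ : ∀ n, V₁ (n + 1) →L[K] V₁ n)
    (t₂ : ∀ n, V₂ (n + 1) →L[K] V₂ n)
    (t₃ : ∀ n, V₃ (n + 1) →L[K] V₃ n)
    (hc₁ : ∀ n x, f n (t₁ n x) = t₂ n (f (n + 1) x))
    (hc₂ : ∀ n y, g n (t₂ n y) = t₃ n (g (n + 1) y))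
    -- density of the images of the transition maps of (V¹_n)
    (hdense : ∀ n, DenseRange (t₁ n)) :
    -- exactness of 0 → lim V¹_n → lim V²_n → lim V³_n → 0 :
    (∀ v : ∀ n, V₁ n, (∀ n, t₁ n (v (n + 1)) = v n) →
      (∀ n, f n (v n) = 0) → ∀ n, v n = 0) ∧
    (∀ w : ∀ n, V₂ n, (∀ n, t₂ n (w (n + 1)) = w n) →
      (∀ n, g n (w n) = 0) →
      ∃ v : ∀ n, V₁ n, (∀ n, t₁ n (v (n + 1)) = v n) ∧ ∀ n, f n (v n) = w n) ∧
    (∀ u : ∀ n, V₃ n, (∀ n, t₃ n (u (n + 1)) = u n) →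
      ∃ w : ∀ n, V₂ n, (∀ n, t₂ n (w (n + 1)) = w n) ∧ ∀ n, g n (w n) = u n) := by
  classical
  refine ⟨?_, ?_, ?_⟩
  · -- left exactness
    intro v _ hfv n
    apply hf_inj n
    rw [hfv n, map_zero]
  · -- middle exactness
    intro w hwc hgw
    have hv : ∀ n, ∃ x, f n x = w n := fun n => (h_exact n (w n)).mp (hgw n)
    refine ⟨fun n => (hv n).choose, fun n => ?_, fun n => (hv n).choose_spec⟩
    apply hf_inj n
    rw [hc₁ n, (hv (n + 1)).choose_spec, hwc n, (hv n).choose_spec]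
  · -- right exactness: topological Mittag-Leffler
    intro u huc
    -- arbitrary lifts
    set w₀ : ∀ n, V₂ n := fun n => Function.surjInv (hg_surj n) (u n) with hw₀
    have hgw₀ : ∀ n, g n (w₀ n) = u n := fun n => Function.surjInv_eq (hg_surj n) (u n)
    -- the defect lies in the image of f
    have hdef : ∀ n, ∃ x, f n x = t₂ n (w₀ (n + 1)) - w₀ n := by
      intro n
      apply (h_exact n _).mp
      rw [map_sub, hc₂ n, hgw₀, hgw₀, huc n, sub_self]
    set x : ∀ n, V₁ n := fun n => (hdef n).choose with hx
    have hfx : ∀ n, f n (x n) = t₂ n (w₀ (n + 1)) - w₀ n := fun n => (hdef n).choose_spec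
    -- solve the lim¹ problem
    obtain ⟨a, ha⟩ := ML_lim1 t₁ hdense x
    refine ⟨fun n => w₀ n + f n (a n), fun n => ?_, fun n => ?_⟩
    · -- compatibility
      rw [map_add, ← hc₁ n]
      have h1 : t₁ n (a (n + 1)) = a n - x n := by
        rw [ha n]; abel
      rw [h1, map_sub, hfx n]
      abel
    · -- lifts u
      rw [map_add, hgw₀ n]
      have h0 : g n (f n (a n)) = 0 := (h_exact n (f n (a n))).mpr ⟨a n, rfl⟩
      rw [h0, add_zero]
end

section
/- Let O_K be a complete discrete valuation ring with uniformizer π and residue field of finite cardinality, K its fraction field, and fix n ∈ ℕ with ε_n = |π^n|. For two K-subspaces U, U' ⊊ K^{d+1}, if U ∩ Λ ≡ U' ∩ Λ (mod π^n Λ) where Λ = O_K^{d+1}, then the tube neighborhoods coincide: Y_U(ε_n) = Y_{U'}(ε_n), where Y_U(ε_n) is the set of points x of rigid projective space P^d with |f(x̃)| ≤ ε_n for every polynomial f in the integral vanishing ideal of P(U) (with at least one unit coefficient) and any unimodular representative x̃ of x. -/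
/-!
STATEMENT 13: let `O_K` be a complete DVR with uniformizer `π` and finite
residue field, `K` its fraction field, and `ε_n = |π^n|`.  For `K`-subspaces
`U, U' ⊊ K^{d+1}`, if `U ∩ Λ ≡ U' ∩ Λ (mod π^n Λ)` (with `Λ = O_K^{d+1}`),
then `Y_U(ε_n) = Y_{U'}(ε_n)`, where `Y_U(ε_n)` is the tube of points `x` of
rigid projective space with `|f(x̃)| ≤ ε_n` for every homogeneous `f` in the
integral vanishing ideal of `P(U)` having a unit coefficient, and any
unimodular representative `x̃` of `x`.

We model `K` as a complete nonarchimedean nontrivially normed field whose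
value group is generated by `‖π‖` (so `O_K = {‖·‖ ≤ 1}` is a complete DVR with
uniformizer `π`), with finite residue field, and `C_p`-points by a complete
algebraically closed isometric normed extension `C`.  Points of projective
space are represented by unimodular tuples; tubes are stated on unimodular
representatives (membership is representative-independent).
-/

open MvPolynomial

variable {K : Type*} [NontriviallyNormedField K]
variable {C : Type*} [NormedField C] [NormedAlgebra K C]

/-- A tuple is unimodular if all coordinates have norm `≤ 1` and some
coordinate has norm `1`. -/
def Unimodular (d : ℕ) (z : Fin (d + 1) → C) : Prop :=
  (∀ i, ‖z i‖ ≤ 1) ∧ ∃ i, ‖z i‖ = 1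

/-- `f` belongs to the integral vanishing ideal of `P(U)`, is homogeneous, and
has at least one coefficient which is a unit of `O_K`. -/
def IsIntegralVanishing (d : ℕ) (U : Submodule K (Fin (d + 1) → K))
    (f : MvPolynomial (Fin (d + 1)) K) : Prop :=
  (∀ m, ‖MvPolynomial.coeff m f‖ ≤ 1) ∧
  (∃ m, ‖MvPolynomial.coeff m f‖ = 1) ∧
  (∃ N, f.IsHomogeneous N) ∧
  (∀ u : Fin (d + 1) → K, u ∈ U → MvPolynomial.eval u f = 0)

/-- The (set of unimodular representatives of points of the) tube
`Y_U(ε)` around `P(U)`. -/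
def Tube (d : ℕ) (U : Submodule K (Fin (d + 1) → K)) (ε : ℝ) :
    Set (Fin (d + 1) → C) :=
  {z | Unimodular d z ∧ ∀ f : MvPolynomial (Fin (d + 1)) K,
    IsIntegralVanishing d U f → ‖MvPolynomial.aeval z f‖ ≤ ε}

/-!
`U ∩ Λ` is a direct summand of `Λ`, i.e. some projection `P` of `K^{d+1}` onto `U`
maps `Λ` into `Λ`. Replacing every column `P eₖ ∈ U ∩ Λ` by a vector of `U' ∩ Λ` congruent to it
mod `π^n` yields an integral matrix `M ≡ 1 (mod π^n)` with `M U ⊆ U'`. For an integral vanishing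
polynomial `f` of `U'`, the polynomial `f ∘ M` is integral, homogeneous and vanishes on `U`; after
dividing by a coefficient of maximal norm it is one of the polynomials defining `Y_U(ε_n)`, so
`|f(Mz)| ≤ ε_n` for `z ∈ Y_U(ε_n)`. Finally `Mz ≡ z (mod π^n)`, hence `|f(z) - f(Mz)| ≤ ε_n`.
-/

lemma IsUltrametricDist.norm_sub_le_max {E : Type*} [SeminormedAddCommGroup E]
    [IsUltrametricDist E] (a b : E) : ‖a - b‖ ≤ max ‖a‖ ‖b‖ := by
  simpa [sub_eq_add_neg] using norm_add_le_max a (-b)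

open IsUltrametricDist
open scoped Matrix

namespace MvPolynomial

theorem mem_of_forall_coeff_mem {R σ : Type*} [CommSemiring R] {S : Subsemiring (MvPolynomial σ R)}
    {A : Set R} (hC : ∀ c ∈ A, MvPolynomial.C c ∈ S) (hX : ∀ i, X i ∈ S) {p : MvPolynomial σ R}
    (hp : ∀ m, coeff m p ∈ A) : p ∈ S := by
  rw [p.as_sum]
  refine S.sum_mem fun m _ => ?_
  rw [monomial_eq]
  exact S.mul_mem (hC _ (hp m)) (S.prod_mem fun i _ => S.pow_mem (hX i) _)

section Integral

variable (σ R : Type*) [NormedCommRing R] [NormOneClass R] [IsUltrametricDist R]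

def integralSubsemiring : Subsemiring (MvPolynomial σ R) where
  carrier := {p | ∀ m, ‖coeff m p‖ ≤ 1}
  mul_mem' {p q} hp hq m := by
    classical
    rw [coeff_mul]
    exact norm_sum_le_of_forall_le_of_nonneg zero_le_one fun x _ =>
      (norm_mul_le _ _).trans (mul_le_one₀ (hp _) (norm_nonneg _) (hq _))
  one_mem' m := by
    classical
    rw [coeff_one]
    split_ifs <;> simp
  add_mem' {p q} hp hq m := by
    rw [coeff_add]
    exact (norm_add_le_max _ _).trans (max_le (hp m) (hq m))
  zero_mem' m := by simp

variable {σ R}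

theorem monomial_mem_integralSubsemiring {m : σ →₀ ℕ} {c : R} (hc : ‖c‖ ≤ 1) :
    monomial m c ∈ integralSubsemiring σ R := by
  classical
  intro m'
  rw [coeff_monomial]
  split_ifs <;> simp [hc]

theorem bind₁_mem_integralSubsemiring {τ : Type*} {L : σ → MvPolynomial τ R}
    (hL : ∀ i, L i ∈ integralSubsemiring τ R) {p : MvPolynomial σ R}
    (hp : p ∈ integralSubsemiring σ R) : bind₁ L p ∈ integralSubsemiring τ R := by
  let S := (integralSubsemiring τ R).comap (bind₁ L : MvPolynomial σ R →+* MvPolynomial τ R)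
  refine mem_of_forall_coeff_mem (S := S) (A := Metric.closedBall 0 1) (fun c hc => ?_)
    (fun i => ?_) (fun m => mem_closedBall_zero_iff.mpr (hp m))
  · rw [Subsemiring.mem_comap, RingHom.coe_coe, bind₁_C_right, ← monomial_zero']
    exact monomial_mem_integralSubsemiring (mem_closedBall_zero_iff.mp hc)
  · rw [Subsemiring.mem_comap, RingHom.coe_coe, bind₁_X_right]
    exact hL i

end Integral

end MvPolynomial

def closeUnitBallPairs (R : Type*) [NormedRing R] [NormOneClass R] [IsUltrametricDist R]
    (ε : ℝ) (hε : 0 ≤ ε) : Subsemiring (R × R) where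
  carrier := {a | ‖a.1‖ ≤ 1 ∧ ‖a.2‖ ≤ 1 ∧ ‖a.1 - a.2‖ ≤ ε}
  mul_mem' {a b} ha hb := by
    obtain ⟨ha₁, ha₂, ha⟩ := ha
    obtain ⟨hb₁, hb₂, hb⟩ := hb
    have hab : a.1 * b.1 - a.2 * b.2 = a.1 * (b.1 - b.2) + (a.1 - a.2) * b.2 := by noncomm_ring
    refine ⟨(norm_mul_le _ _).trans (mul_le_one₀ ha₁ (norm_nonneg _) hb₁),
      (norm_mul_le _ _).trans (mul_le_one₀ ha₂ (norm_nonneg _) hb₂), ?_⟩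
    rw [Prod.fst_mul, Prod.snd_mul, hab]
    refine (norm_add_le_max _ _).trans (max_le ?_ ?_)
    · exact (norm_mul_le _ _).trans ((mul_le_of_le_one_left (norm_nonneg _) ha₁).trans hb)
    · exact (norm_mul_le _ _).trans ((mul_le_of_le_one_right (norm_nonneg _) hb₂).trans ha)
  one_mem' := by simp [hε]
  add_mem' {a b} ha hb := by
    obtain ⟨ha₁, ha₂, ha⟩ := ha
    obtain ⟨hb₁, hb₂, hb⟩ := hb
    refine ⟨(norm_add_le_max _ _).trans (max_le ha₁ hb₁),
      (norm_add_le_max _ _).trans (max_le ha₂ hb₂), ?_⟩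
    rw [Prod.fst_add, Prod.snd_add, add_sub_add_comm]
    exact (norm_add_le_max _ _).trans (max_le ha hb)
  zero_mem' := by simp [hε]

theorem MvPolynomial.norm_aeval_sub_aeval_le {𝕜 R σ : Type*} [NormedField 𝕜] [NormedCommRing R]
    [NormOneClass R] [IsUltrametricDist R] [NormedAlgebra 𝕜 R] {p : MvPolynomial σ 𝕜}
    (hp : ∀ m, ‖coeff m p‖ ≤ 1) {z y : σ → R} (hz : ∀ i, ‖z i‖ ≤ 1) (hy : ∀ i, ‖y i‖ ≤ 1)
    {ε : ℝ} (hε : 0 ≤ ε) (hzy : ∀ i, ‖z i - y i‖ ≤ ε) :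
    ‖aeval z p - aeval y p‖ ≤ ε := by
  -- `p ↦ (p(z), p(y))` is a ring map, and integral constants and the variables land in the
  -- subsemiring of close integral pairs
  let S := (closeUnitBallPairs R ε hε).comap
    (RingHom.prod (aeval z).toRingHom (aeval y).toRingHom : MvPolynomial σ 𝕜 →+* R × R)
  have hpS : p ∈ S := by
    refine mem_of_forall_coeff_mem (A := Metric.closedBall 0 1) (fun c hc => ?_) (fun i => ?_)
      (fun m => mem_closedBall_zero_iff.mpr (hp m))
    · rw [mem_closedBall_zero_iff] at hc
      simp [S, closeUnitBallPairs, norm_algebraMap', hc, hε]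
    · simp [S, closeUnitBallPairs, hz i, hy i, hzy i]
  exact hpS.2.2

theorem norm_aeval_le_of_mem_tube {d : ℕ} {U : Submodule K (Fin (d + 1) → K)} {ε : ℝ}
    (hε : 0 ≤ ε) {z : Fin (d + 1) → C} (hz : z ∈ Tube d U ε) {g : MvPolynomial (Fin (d + 1)) K}
    (hg : ∀ m, ‖coeff m g‖ ≤ 1) (hhom : ∃ N, g.IsHomogeneous N)
    (hvan : ∀ u ∈ U, eval u g = 0) : ‖aeval z g‖ ≤ ε := by
  rcases eq_or_ne g 0 with rfl | hg0
  · simpa using hε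
  obtain ⟨m₀, hm₀, hmax⟩ :=
    g.support.exists_max_image (fun m => ‖coeff m g‖) (support_nonempty.mpr hg0)
  set c := coeff m₀ g
  have hc : c ≠ 0 := mem_support_iff.mp hm₀
  have hcg : ∀ m, ‖coeff m g‖ ≤ ‖c‖ := fun m => by
    by_cases hm : m ∈ g.support
    · exact hmax m hm
    · simp [notMem_support_iff.mp hm]
  have hprimitive : IsIntegralVanishing d U (MvPolynomial.C c⁻¹ * g) := by
    refine ⟨fun m => ?_, ⟨m₀, ?_⟩, ?_, fun u hu => ?_⟩
    · rw [coeff_C_mul, norm_mul, norm_inv, inv_mul_le_iff₀ (norm_pos_iff.mpr hc), mul_one]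
      exact hcg m
    · simp [c, hc]
    · obtain ⟨N, hN⟩ := hhom
      exact ⟨N, by simpa using (isHomogeneous_C _ c⁻¹).mul hN⟩
    · simp [hvan u hu]
  have hgc : g = MvPolynomial.C c * (MvPolynomial.C c⁻¹ * g) := by
    rw [← mul_assoc, ← C_mul, mul_inv_cancel₀ hc, C_1, one_mul]
  calc ‖aeval z g‖ = ‖c‖ * ‖aeval z (MvPolynomial.C c⁻¹ * g)‖ := by
        conv_lhs => rw [hgc]
        rw [map_mul, aeval_C, norm_mul, norm_algebraMap']
    _ ≤ 1 * ε := mul_le_mul (hg m₀) (hz.2 _ hprimitive) (norm_nonneg _) zero_le_one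
    _ = ε := one_mul ε

namespace Submodule

variable {𝕜 ι : Type*} [NormedField 𝕜] [Fintype ι]

theorem exists_mem_apply_eq_one_norm_le_one {U : Submodule 𝕜 (ι → 𝕜)} (hU : U ≠ ⊥) :
    ∃ v ∈ U, ∃ i, v i = 1 ∧ ‖v‖ ≤ 1 := by
  obtain ⟨v, hvU, hv⟩ := U.exists_mem_ne_zero_of_ne_bot hU
  obtain ⟨i₁, hi₁⟩ := Function.ne_iff.mp hv
  have : Nonempty ι := ⟨i₁⟩
  obtain ⟨i₀, hi₀⟩ := Finite.exists_max fun i => ‖v i‖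
  have hv₀ : v i₀ ≠ 0 := norm_pos_iff.mp ((norm_pos_iff.mpr hi₁).trans_le (hi₀ i₁))
  refine ⟨(v i₀)⁻¹ • v, U.smul_mem _ hvU, i₀, inv_mul_cancel₀ hv₀,
    (pi_norm_le_iff_of_nonneg zero_le_one).mpr fun i => ?_⟩
  rw [Pi.smul_apply, smul_eq_mul, norm_mul, norm_inv, inv_mul_le_iff₀ (norm_pos_iff.mpr hv₀),
    mul_one]
  exact hi₀ i

theorem exists_integral_projection [IsUltrametricDist 𝕜] (U : Submodule 𝕜 (ι → 𝕜)) :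
    ∃ P : (ι → 𝕜) →ₗ[𝕜] ι → 𝕜,
      (∀ x, P x ∈ U) ∧ (∀ u ∈ U, P u = u) ∧ ∀ x, ‖x‖ ≤ 1 → ‖P x‖ ≤ 1 := by
  induction U using WellFoundedLT.induction with
  | _ U ih =>
  rcases eq_or_ne U ⊥ with rfl | hU
  · exact ⟨0, fun _ => zero_mem _, fun u hu => ((mem_bot 𝕜).mp hu).symm, fun _ _ => by simp⟩
  obtain ⟨v, hvU, i₀, hvi₀, hv⟩ := exists_mem_apply_eq_one_norm_le_one hU
  let U₁ := U ⊓ LinearMap.ker (LinearMap.proj i₀)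
  have hvU₁ : v ∉ U₁ := fun h => by simpa [U₁, hvi₀] using (mem_inf.mp h).2
  obtain ⟨P₁, hP₁U₁, hP₁id, hP₁int⟩ :=
    ih U₁ (lt_of_le_of_ne inf_le_left fun h => hvU₁ (h ▸ hvU))
  -- `U = U₁ ⊕ K v`, and `T` projects onto `K v` along the hyperplane `x i₀ = 0` containing `U₁`
  let T : (ι → 𝕜) →ₗ[𝕜] ι → 𝕜 := (LinearMap.proj i₀).smulRight v
  have hTU₁ : ∀ u ∈ U, u - T u ∈ U₁ := fun u hu =>
    mem_inf.mpr ⟨U.sub_mem hu (U.smul_mem _ hvU), by simp [T, hvi₀]⟩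
  have hTint : ∀ x : ι → 𝕜, ‖x‖ ≤ 1 → ‖T x‖ ≤ 1 := fun x hx => by
    rw [LinearMap.smulRight_apply, norm_smul]
    exact mul_le_one₀ ((norm_le_pi_norm x i₀).trans hx) (norm_nonneg _) hv
  refine ⟨P₁ ∘ₗ (LinearMap.id - T) + T, fun x => ?_, fun u hu => ?_, fun x hx => ?_⟩
  · exact U.add_mem (mem_inf.mp (hP₁U₁ _)).1 (U.smul_mem _ hvU)
  · simp [hP₁id _ (hTU₁ u hu)]
  · refine (norm_add_le_max _ _).trans (max_le (hP₁int _ ?_) (hTint x hx))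
    exact (norm_sub_le_max _ _).trans (max_le hx (hTint x hx))

end Submodule

theorem Submodule.exists_matrix_mulVec_mem_of_close {𝕜 ι : Type*} [NormedField 𝕜]
    [IsUltrametricDist 𝕜] [Fintype ι] [DecidableEq ι] {U U' : Submodule 𝕜 (ι → 𝕜)} {ε : ℝ}
    (hclose : ∀ v ∈ U, (∀ i, ‖v i‖ ≤ 1) →
      ∃ w ∈ U', (∀ i, ‖w i‖ ≤ 1) ∧ ∀ i, ‖v i - w i‖ ≤ ε) :
    ∃ M : Matrix ι ι 𝕜, (∀ i k, ‖M i k‖ ≤ 1) ∧ (∀ i k, ‖M i k - (1 : Matrix ι ι 𝕜) i k‖ ≤ ε) ∧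
      ∀ u ∈ U, M *ᵥ u ∈ U' := by
  obtain ⟨P, hPU, hPid, hPint⟩ := U.exists_integral_projection
  let V := LinearMap.toMatrix' P
  have hVcol : ∀ k, V.col k = P (Pi.single k 1) := fun k => by
    rw [← Matrix.mulVec_single_one, LinearMap.toMatrix'_mulVec]
  have hVint : ∀ k i, ‖V i k‖ ≤ 1 := fun k i => by
    have := (norm_le_pi_norm _ i).trans (hPint (Pi.single k 1) (by rw [Pi.norm_single, norm_one]))
    rwa [← hVcol] at this
  choose w hwU' hwint hwclose using fun k =>
    hclose (V.col k) (hVcol k ▸ hPU _) (hVint k)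
  let W : Matrix ι ι 𝕜 := (Matrix.of w)ᵀ
  have hW : ∀ x, W *ᵥ x ∈ U' := fun x => by
    rw [Matrix.mulVec_transpose, Matrix.vecMul_eq_sum]
    exact U'.sum_mem fun k _ => U'.smul_mem _ (hwU' k)
  refine ⟨1 + (W - V), fun i k => ?_, fun i k => ?_, fun u hu => ?_⟩
  · refine (norm_add_le_max _ _).trans (max_le ?_ ?_)
    · rw [Matrix.one_apply]; split_ifs <;> simp
    · exact (norm_sub_le_max _ _).trans (max_le (hwint k i) (hVint k i))
  · simpa [W, norm_sub_rev] using hwclose k i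
  · have hVu : V *ᵥ u = u := by rw [LinearMap.toMatrix'_mulVec, hPid u hu]
    rw [Matrix.add_mulVec, Matrix.sub_mulVec, hVu, Matrix.one_mulVec, add_sub_cancel]
    exact hW u

theorem Matrix.aeval_bind₁_toMvPolynomial {R S m n : Type*} [CommSemiring R] [CommSemiring S]
    [Algebra R S] [Fintype n] (M : Matrix m n R) (z : n → S) (p : MvPolynomial m R) :
    aeval z (bind₁ M.toMvPolynomial p) = aeval (M.map (algebraMap R S) *ᵥ z) p := by
  rw [aeval_bind₁]
  refine congrArg (fun x => aeval x p) (funext fun i => ?_)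
  rw [← toMvPolynomial_eval_eq_apply, toMvPolynomial_map, eval_map, aeval_def]

theorem Matrix.norm_map_mulVec_le {𝕜 R m n : Type*} [NormedField 𝕜] [NormedCommRing R]
    [NormOneClass R] [IsUltrametricDist R] [NormedAlgebra 𝕜 R] [Fintype n] {M : Matrix m n 𝕜}
    {c : ℝ} (hc : 0 ≤ c) (hM : ∀ i k, ‖M i k‖ ≤ c) {z : n → R} (hz : ∀ k, ‖z k‖ ≤ 1) (i : m) :
    ‖(M.map (algebraMap 𝕜 R) *ᵥ z) i‖ ≤ c := by
  simp only [mulVec, dotProduct, map_apply]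
  refine norm_sum_le_of_forall_le_of_nonneg hc fun k _ => ?_
  refine (norm_mul_le _ _).trans ?_
  rw [norm_algebraMap']
  exact (mul_le_of_le_one_right (norm_nonneg _) (hz k)).trans (hM i k)

theorem norm_aeval_le_of_mem_tube_of_mulVec_mem [IsUltrametricDist K] [IsUltrametricDist C]
    {d : ℕ} {U U' : Submodule K (Fin (d + 1) → K)} {ε : ℝ} (hε : 0 ≤ ε)
    {M : Matrix (Fin (d + 1)) (Fin (d + 1)) K} (hM : ∀ i k, ‖M i k‖ ≤ 1)
    (hM1 : ∀ i k, ‖M i k - (1 : Matrix (Fin (d + 1)) (Fin (d + 1)) K) i k‖ ≤ ε)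
    (hMU : ∀ u ∈ U, M *ᵥ u ∈ U') {z : Fin (d + 1) → C} (hz : z ∈ Tube d U ε)
    {f : MvPolynomial (Fin (d + 1)) K} (hf : IsIntegralVanishing d U' f) :
    ‖aeval z f‖ ≤ ε := by
  obtain ⟨hfint, -, ⟨N, hfhom⟩, hfvan⟩ := hf
  let y := M.map (algebraMap K C) *ᵥ z
  have hfy : ‖aeval y f‖ ≤ ε := by
    rw [← Matrix.aeval_bind₁_toMvPolynomial]
    refine norm_aeval_le_of_mem_tube hε hz ?_
      ⟨1 * N, hfhom.aeval _ M.toMvPolynomial_isHomogeneous⟩ fun u hu => ?_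
    · refine bind₁_mem_integralSubsemiring (fun i => ?_) hfint
      exact Subsemiring.sum_mem _ fun k _ => monomial_mem_integralSubsemiring (hM i k)
    · have h := M.aeval_bind₁_toMvPolynomial u f
      rw [Algebra.algebraMap_self, RingHom.coe_id, Matrix.map_id] at h
      exact h.trans (hfvan _ (hMU u hu))
  have hzy : z - y = (1 - M).map (algebraMap K C) *ᵥ z := by
    rw [← RingHom.mapMatrix_apply, map_sub, map_one, RingHom.mapMatrix_apply, Matrix.sub_mulVec,
      Matrix.one_mulVec]
  have hzy_le : ∀ i, ‖z i - y i‖ ≤ ε := fun i => by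
    rw [← Pi.sub_apply, hzy]
    refine Matrix.norm_map_mulVec_le hε (fun i k => ?_) hz.1.1 i
    rw [Matrix.sub_apply, norm_sub_rev]
    exact hM1 i k
  calc ‖aeval z f‖ = ‖(aeval z f - aeval y f) + aeval y f‖ := by rw [sub_add_cancel]
    _ ≤ ε := (norm_add_le_max _ _).trans <| max_le
      (norm_aeval_sub_aeval_le hfint hz.1.1 (Matrix.norm_map_mulVec_le zero_le_one hM hz.1.1) hε
        hzy_le) hfy

theorem tube_subset_of_forall_exists_close [IsUltrametricDist K] [IsUltrametricDist C] {d : ℕ}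
    {U U' : Submodule K (Fin (d + 1) → K)} {ε : ℝ} (hε : 0 ≤ ε)
    (hclose : ∀ v ∈ U, (∀ i, ‖v i‖ ≤ 1) →
      ∃ w ∈ U', (∀ i, ‖w i‖ ≤ 1) ∧ ∀ i, ‖v i - w i‖ ≤ ε) :
    Tube (C := C) d U ε ⊆ Tube (C := C) d U' ε := by
  obtain ⟨M, hM, hM1, hMU⟩ := Submodule.exists_matrix_mulVec_mem_of_close hclose
  exact fun z hz => ⟨hz.1, fun f hf => norm_aeval_le_of_mem_tube_of_mulVec_mem hε hM hM1 hMU hz hf⟩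

theorem stmt13_general [IsUltrametricDist K] [IsUltrametricDist C]
    (π : K)
    (d n : ℕ)
    (U U' : Submodule K (Fin (d + 1) → K))
    -- `U ∩ Λ ≡ U' ∩ Λ (mod π^n Λ)` :
    (hcong₁ : ∀ v ∈ U, (∀ i, ‖v i‖ ≤ 1) →
      ∃ w ∈ U', (∀ i, ‖w i‖ ≤ 1) ∧ ∀ i, ‖v i - w i‖ ≤ ‖π‖ ^ n)
    (hcong₂ : ∀ w ∈ U', (∀ i, ‖w i‖ ≤ 1) →
      ∃ v ∈ U, (∀ i, ‖v i‖ ≤ 1) ∧ ∀ i, ‖w i - v i‖ ≤ ‖π‖ ^ n) :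
    Tube (C := C) d U (‖π‖ ^ n) = Tube (C := C) d U' (‖π‖ ^ n) := by
  have hε : 0 ≤ ‖π‖ ^ n := pow_nonneg (norm_nonneg π) n
  exact (tube_subset_of_forall_exists_close hε hcong₁).antisymm
    (tube_subset_of_forall_exists_close hε hcong₂)

theorem stmt13 [CompleteSpace K] [IsUltrametricDist K]
    [CompleteSpace C] [IsUltrametricDist C] [IsAlgClosed C]
    (hiso : ∀ x : K, ‖algebraMap K C x‖ = ‖x‖)
    (π : K) (hπ0 : π ≠ 0) (hπ1 : ‖π‖ < 1)
    (hdisc : ∀ x : K, x ≠ 0 → ∃ m : ℤ, ‖x‖ = ‖π‖ ^ m)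
    -- finite residue field of `O_K`
    (hfin : ∃ S : Finset K, ∀ x : K, ‖x‖ ≤ 1 → ∃ s ∈ S, ‖x - s‖ < 1)
    (d n : ℕ)
    (U U' : Submodule K (Fin (d + 1) → K))
    (hU₁ : U ≠ ⊥) (hU₂ : U ≠ ⊤) (hU'₁ : U' ≠ ⊥) (hU'₂ : U' ≠ ⊤)
    -- `U ∩ Λ ≡ U' ∩ Λ (mod π^n Λ)` :
    (hcong₁ : ∀ v ∈ U, (∀ i, ‖v i‖ ≤ 1) →
      ∃ w ∈ U', (∀ i, ‖w i‖ ≤ 1) ∧ ∀ i, ‖v i - w i‖ ≤ ‖π‖ ^ n)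
    (hcong₂ : ∀ w ∈ U', (∀ i, ‖w i‖ ≤ 1) →
      ∃ v ∈ U, (∀ i, ‖v i‖ ≤ 1) ∧ ∀ i, ‖w i - v i‖ ≤ ‖π‖ ^ n) :
    Tube (C := C) d U (‖π‖ ^ n) = Tube (C := C) d U' (‖π‖ ^ n) :=
  stmt13_general π d n U U' hcong₁ hcong₂
end
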